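/- arXiv:1703.03166 — 17 statements merged into one kernel-verified Lean document; each statement's English description precedes it below -/
import Mathlib

section
/- (Theorem 1(i), Single Attack.) Consider the single-attack matrix C(β) and any dominant left eigenvector γ of C(β). For every β ∈ (0,1): γ_i < γ_1 for all i ∈ {2,…,n−2}, and γ_n < γ_{n−1}. (Equivalently: no ordinary subject ever attains social power exceeding the centre node, and the attacker never attains social power exceeding the subject it attaches to.) -/
/-- The single-attack relative interaction matrix `C(β)` on nodes `1,…,n`:
row 1 has entries `c j` at columns `j = 2,…,n-1`; rows `i = 2,…,n-2` have a `1`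
at column 1; row `n-1` has `1-β` at column 1 and `β` at column `n`; row `n`
has a `1` at column `n-1`. -/
def singleAttackC (n : ℕ) (c : ℕ → ℝ) (β : ℝ) : ℕ → ℕ → ℝ := fun i j =>
  if i = 1 then (if 2 ≤ j ∧ j ≤ n - 1 then c j else 0)
  else if 2 ≤ i ∧ i ≤ n - 2 then (if j = 1 then 1 else 0)
  else if i = n - 1 then (if j = 1 then 1 - β else if j = n then β else 0)
  else if i = n then (if j = n - 1 then 1 else 0)
  else 0

theorem single_attack_thm1_i
    (n : ℕ) (hn : 4 ≤ n) (c : ℕ → ℝ) (β : ℝ)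
    (hc : ∀ j ∈ Finset.Icc 2 (n - 1), 0 < c j)
    (hcsum : ∑ j ∈ Finset.Icc 2 (n - 1), c j = 1)
    (hβ : β ∈ Set.Ioo (0 : ℝ) 1)
    (γ : ℕ → ℝ)
    (hγpos : ∀ i ∈ Finset.Icc 1 n, 0 < γ i)
    (hγsum : ∑ i ∈ Finset.Icc 1 n, γ i = 1)
    (heig : ∀ j ∈ Finset.Icc 1 n,
      ∑ i ∈ Finset.Icc 1 n, γ i * singleAttackC n c β i j = γ j) :
    (∀ i ∈ Finset.Icc 2 (n - 2), γ i < γ 1) ∧ γ n < γ (n - 1) := by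
  obtain ⟨hβ0, hβ1⟩ := hβ
  have hγ1 : 0 < γ 1 := hγpos 1 (by simp [Finset.mem_Icc]; omega)
  have hγn1 : 0 < γ (n - 1) := hγpos (n - 1) (by simp [Finset.mem_Icc]; omega)
  constructor
  · intro j hj
    rw [Finset.mem_Icc] at hj
    -- column equation for j : sum = γ 1 * c j
    have hjmem : j ∈ Finset.Icc 1 n := by rw [Finset.mem_Icc]; omega
    have heq := heig j hjmem
    rw [Finset.sum_eq_single_of_mem 1 (by rw [Finset.mem_Icc]; omega)
      (fun i hi hne => by
        rw [Finset.mem_Icc] at hi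
        have hCz : singleAttackC n c β i j = 0 := by
          unfold singleAttackC
          rw [if_neg hne]
          by_cases h2 : 2 ≤ i ∧ i ≤ n - 2
          · rw [if_pos h2, if_neg (by omega)]
          · rw [if_neg h2]
            by_cases h3 : i = n - 1
            · rw [if_pos h3, if_neg (by omega), if_neg (by omega)]
            · rw [if_neg h3]
              by_cases h4 : i = n
              · rw [if_pos h4, if_neg (by omega)]
              · rw [if_neg h4]
        rw [hCz, mul_zero])] at heq
    have hC1 : singleAttackC n c β 1 j = c j := by
      unfold singleAttackC
      rw [if_pos rfl, if_pos (by omega)]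
    rw [hC1] at heq
    -- c j < 1
    have hjIcc : j ∈ Finset.Icc 2 (n - 1) := by rw [Finset.mem_Icc]; omega
    have hn1mem : n - 1 ∈ (Finset.Icc 2 (n - 1)).erase j := by
      rw [Finset.mem_erase, Finset.mem_Icc]; omega
    have hrest : 0 < ∑ k ∈ (Finset.Icc 2 (n - 1)).erase j, c k := by
      refine lt_of_lt_of_le (hc (n - 1) (by rw [Finset.mem_Icc]; omega)) ?_
      refine Finset.single_le_sum (fun k hk => (hc k (Finset.mem_of_mem_erase hk)).le) hn1mem
    have hsplit : c j + ∑ k ∈ (Finset.Icc 2 (n - 1)).erase j, c k = 1 := by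
      rw [Finset.add_sum_erase _ _ hjIcc, hcsum]
    have hcj1 : c j < 1 := by linarith
    rw [← heq]
    nlinarith [hγ1]
  · -- column n equation : γ n = γ (n-1) * β
    have heq := heig n (by rw [Finset.mem_Icc]; omega)
    rw [Finset.sum_eq_single_of_mem (n - 1) (by rw [Finset.mem_Icc]; omega)
      (fun i hi hne => by
        rw [Finset.mem_Icc] at hi
        have hCz : singleAttackC n c β i n = 0 := by
          unfold singleAttackC
          by_cases h1 : i = 1
          · rw [if_pos h1, if_neg (by omega)]
          · rw [if_neg h1]
            by_cases h2 : 2 ≤ i ∧ i ≤ n - 2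
            · rw [if_pos h2, if_neg (by omega)]
            · rw [if_neg h2, if_neg hne]
              by_cases h4 : i = n
              · rw [if_pos h4, if_neg (by omega)]
              · rw [if_neg h4]
        rw [hCz, mul_zero])] at heq
    have hC : singleAttackC n c β (n - 1) n = β := by
      unfold singleAttackC
      rw [if_neg (by omega), if_neg (by omega), if_pos rfl, if_neg (by omega), if_pos rfl]
    rw [hC] at heq
    rw [← heq]
    nlinarith [hγn1]
end

section
/- (Theorem 1(ii), Single Attack.) Consider the single-attack matrix C(β) and any dominant left eigenvector γ of C(β). Then: (1) γ_1 > γ_i for all i ≠ 1 if and only if β < 1 − c_{1,n−1} (equivalently β < Σ_{i=2}^{n−2} c_{1,i}); (2) γ_{n−1} > γ_i for all i ≠ n−1 if and only if β > 1 − c_{1,n−1}; and (3) γ_1 = γ_{n−1} > γ_i for all i ≠ 1, n−1 if and only if β = 1 − c_{1,n−1}. -/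
theorem single_attack_thm1_ii
    (n : ℕ) (hn : 4 ≤ n) (c : ℕ → ℝ) (β : ℝ)
    (hc : ∀ j ∈ Finset.Icc 2 (n - 1), 0 < c j)
    (hcsum : ∑ j ∈ Finset.Icc 2 (n - 1), c j = 1)
    (hβ : β ∈ Set.Ioo (0 : ℝ) 1)
    (γ : ℕ → ℝ)
    (hγpos : ∀ i ∈ Finset.Icc 1 n, 0 < γ i)
    (hγsum : ∑ i ∈ Finset.Icc 1 n, γ i = 1)
    (heig : ∀ j ∈ Finset.Icc 1 n,
      ∑ i ∈ Finset.Icc 1 n, γ i * singleAttackC n c β i j = γ j) :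
    ((∀ i ∈ Finset.Icc 1 n, i ≠ 1 → γ 1 > γ i) ↔ β < 1 - c (n - 1)) ∧
    ((∀ i ∈ Finset.Icc 1 n, i ≠ n - 1 → γ (n - 1) > γ i) ↔ β > 1 - c (n - 1)) ∧
    ((γ 1 = γ (n - 1) ∧ ∀ i ∈ Finset.Icc 1 n, i ≠ 1 → i ≠ n - 1 → γ 1 > γ i) ↔
      β = 1 - c (n - 1)) := by
  obtain ⟨hβ0, hβ1⟩ := hβ
  have h1mem : (1:ℕ) ∈ Finset.Icc 1 n := Finset.mem_Icc.mpr (by omega)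
  have hn1mem : n - 1 ∈ Finset.Icc 1 n := Finset.mem_Icc.mpr (by omega)
  have hnmem : n ∈ Finset.Icc 1 n := Finset.mem_Icc.mpr (by omega)
  have hγ1 : 0 < γ 1 := hγpos 1 h1mem
  have hγm : 0 < γ (n-1) := hγpos _ hn1mem
  have hγn : 0 < γ n := hγpos _ hnmem
  have hcm : 0 < c (n-1) := hc _ (Finset.mem_Icc.mpr (by omega))
  -- every c j with 2 ≤ j ≤ n-1 is < 1
  have hclt : ∀ j ∈ Finset.Icc 2 (n-1), c j < 1 := by
    intro j hj
    have hjb := Finset.mem_Icc.mp hj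
    have hsplit := Finset.add_sum_erase _ c hj
    have hpos : 0 < ∑ k ∈ (Finset.Icc 2 (n-1)).erase j, c k := by
      apply Finset.sum_pos
      · intro k hk; exact hc k (Finset.mem_of_mem_erase hk)
      · rcases eq_or_ne j 2 with h2 | h2
        · exact ⟨n-1, Finset.mem_erase.mpr ⟨by omega, Finset.mem_Icc.mpr (by omega)⟩⟩
        · exact ⟨2, Finset.mem_erase.mpr ⟨by omega, Finset.mem_Icc.mpr (by omega)⟩⟩
    rw [hcsum] at hsplit
    linarith
  -- column j equation for 2 ≤ j ≤ n-2
  have hcolj : ∀ j, 2 ≤ j → j ≤ n - 2 → γ 1 * c j = γ j := by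
    intro j h2 hjle
    have h := heig j (Finset.mem_Icc.mpr (by omega))
    have hz : ∀ i ∈ Finset.Icc 1 n, i ≠ 1 → γ i * singleAttackC n c β i j = 0 := by
      intro i hi hne
      have hib := Finset.mem_Icc.mp hi
      have hC : singleAttackC n c β i j = 0 := by
        unfold singleAttackC; split_ifs <;> first | rfl | (exfalso; omega)
      rw [hC, mul_zero]
    rw [Finset.sum_eq_single_of_mem 1 h1mem hz] at h
    have hC : singleAttackC n c β 1 j = c j := by
      unfold singleAttackC; split_ifs <;> first | rfl | (exfalso; omega)
    rw [hC] at h; exact h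
  -- column n-1 equation
  have hcolm : γ 1 * c (n-1) + γ n = γ (n-1) := by
    have h := heig (n-1) hn1mem
    have hsplit : ∀ i ∈ Finset.Icc 1 n, γ i * singleAttackC n c β i (n-1)
        = (if i = 1 then γ 1 * c (n-1) else 0) + (if i = n then γ n else 0) := by
      intro i hi
      have hib := Finset.mem_Icc.mp hi
      rcases eq_or_ne i 1 with rfl | h1
      · have hC : singleAttackC n c β 1 (n-1) = c (n-1) := by
          unfold singleAttackC; split_ifs <;> first | rfl | (exfalso; omega)
        rw [hC]; simp [show (1:ℕ) ≠ n by omega]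
      rcases eq_or_ne i n with h2 | h2
      · have hC : singleAttackC n c β i (n-1) = 1 := by
          unfold singleAttackC; split_ifs <;> first | rfl | (exfalso; omega)
        rw [hC, if_neg h1, if_pos h2, h2]; ring
      · have hC : singleAttackC n c β i (n-1) = 0 := by
          unfold singleAttackC; split_ifs <;> first | rfl | (exfalso; omega)
        rw [hC]; simp [h1, h2]
    rw [Finset.sum_congr rfl hsplit, Finset.sum_add_distrib,
      Finset.sum_ite_eq' (Finset.Icc 1 n) 1 (fun _ => γ 1 * c (n-1)),
      Finset.sum_ite_eq' (Finset.Icc 1 n) n (fun _ => γ n),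
      if_pos h1mem, if_pos hnmem] at h
    exact h
  -- column n equation
  have hcoln : γ (n-1) * β = γ n := by
    have h := heig n hnmem
    have hz : ∀ i ∈ Finset.Icc 1 n, i ≠ n - 1 → γ i * singleAttackC n c β i n = 0 := by
      intro i hi hne
      have hib := Finset.mem_Icc.mp hi
      have hC : singleAttackC n c β i n = 0 := by
        unfold singleAttackC; split_ifs <;> first | rfl | (exfalso; omega)
      rw [hC, mul_zero]
    rw [Finset.sum_eq_single_of_mem (n-1) hn1mem hz] at h
    have hC : singleAttackC n c β (n-1) n = β := by
      unfold singleAttackC; split_ifs <;> first | rfl | (exfalso; omega)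
    rw [hC] at h; exact h
  have key : γ (n-1) * (1 - β) = γ 1 * c (n-1) := by linear_combination -hcolm - hcoln
  -- strict inequalities for small nodes: γ i < γ 1 for 2 ≤ i ≤ n-2
  have hsmall : ∀ i, 2 ≤ i → i ≤ n - 2 → γ i < γ 1 := by
    intro i h2 hile
    have h := hcolj i h2 hile
    have hlt := hclt i (Finset.mem_Icc.mpr (by omega))
    have hpos := hc i (Finset.mem_Icc.mpr (by omega))
    nlinarith
  have hnlt : γ n < γ (n-1) := by nlinarith [hcoln]
  refine ⟨⟨?_, ?_⟩, ⟨?_, ?_⟩, ⟨?_, ?_⟩⟩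
  · -- (1) forward
    intro H
    have hAB : γ (n-1) < γ 1 := H (n-1) hn1mem (by omega)
    nlinarith [key]
  · -- (1) backward
    intro hb i hi hne
    have hib := Finset.mem_Icc.mp hi
    have hBA : γ (n-1) < γ 1 := by nlinarith [key]
    have : (2 ≤ i ∧ i ≤ n-2) ∨ i = n-1 ∨ i = n := by omega
    rcases this with ⟨h2, h3⟩ | rfl | rfl
    · exact hsmall i h2 h3
    · exact hBA
    · linarith
  · -- (2) forward
    intro H
    have hAB : γ 1 < γ (n-1) := H 1 h1mem (by omega)
    nlinarith [key]
  · -- (2) backward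
    intro hb i hi hne
    have hib := Finset.mem_Icc.mp hi
    have hBA : γ 1 < γ (n-1) := by nlinarith [key]
    have : i = 1 ∨ (2 ≤ i ∧ i ≤ n-2) ∨ i = n := by omega
    rcases this with rfl | ⟨h2, h3⟩ | rfl
    · exact hBA
    · linarith [hsmall i h2 h3]
    · exact hnlt
  · -- (3) forward
    rintro ⟨heq, -⟩
    have : γ 1 * (1 - β) = γ 1 * c (n-1) := by rw [heq] at key ⊢; exact key
    have := mul_left_cancel₀ (ne_of_gt hγ1) this
    linarith
  · -- (3) backward
    intro hb
    have heq : γ 1 = γ (n-1) := by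
      have h1 : (1 : ℝ) - β = c (n-1) := by linarith
      rw [← h1] at key
      have := mul_right_cancel₀ (by linarith : (1:ℝ) - β ≠ 0) key
      exact this.symm
    refine ⟨heq, ?_⟩
    intro i hi hne1 hnem
    have hib := Finset.mem_Icc.mp hi
    have : (2 ≤ i ∧ i ≤ n-2) ∨ i = n := by omega
    rcases this with ⟨h2, h3⟩ | rfl
    · exact hsmall i h2 h3
    · rw [heq]; exact hnlt
end

section
/- (Theorem 1(iii), Single Attack.) Consider the single-attack matrix C(β) and any dominant left eigenvector γ of C(β). Then γ_n > γ_1 if and only if β > 1/(1 + c_{1,n−1}); that is, the attacker node n attains social power exceeding the centre node 1 exactly when the weight β it receives from subject n−1 exceeds 1/(1 + c_{1,n−1}). -/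
theorem single_attack_thm1_iii
    (n : ℕ) (hn : 4 ≤ n) (c : ℕ → ℝ) (β : ℝ)
    (hc : ∀ j ∈ Finset.Icc 2 (n - 1), 0 < c j)
    (hcsum : ∑ j ∈ Finset.Icc 2 (n - 1), c j = 1)
    (hβ : β ∈ Set.Ioo (0 : ℝ) 1)
    (γ : ℕ → ℝ)
    (hγpos : ∀ i ∈ Finset.Icc 1 n, 0 < γ i)
    (hγsum : ∑ i ∈ Finset.Icc 1 n, γ i = 1)
    (heig : ∀ j ∈ Finset.Icc 1 n,
      ∑ i ∈ Finset.Icc 1 n, γ i * singleAttackC n c β i j = γ j) :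
    γ n > γ 1 ↔ β > 1 / (1 + c (n - 1)) := by
  obtain ⟨hβ0, hβ1⟩ := hβ
  have hc' : 0 < c (n - 1) := hc (n - 1) (by simp [Finset.mem_Icc]; omega)
  have hγ1 : 0 < γ 1 := hγpos 1 (by simp [Finset.mem_Icc]; omega)
  -- column n : γ n = γ (n-1) * β
  have h1 : γ (n - 1) * β = γ n := by
    have := heig n (by simp [Finset.mem_Icc]; omega)
    rw [Finset.sum_eq_single_of_mem (n - 1) (by simp [Finset.mem_Icc]; omega)] at this
    · rw [← this]
      simp only [singleAttackC]
      split_ifs <;> first | ring1 | (exfalso; omega)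
    · intro i hi hne
      simp only [Finset.mem_Icc] at hi
      simp only [singleAttackC]
      split_ifs <;> first | ring1 | (exfalso; omega)
  -- column n-1 : γ (n-1) = γ 1 * c (n-1) + γ n
  have h2 : γ 1 * c (n - 1) + γ n = γ (n - 1) := by
    have := heig (n - 1) (by simp [Finset.mem_Icc]; omega)
    rw [← this]
    have hfun : ∀ i ∈ Finset.Icc 1 n, γ i * singleAttackC n c β i (n - 1) =
        (if i = 1 then γ 1 * c (n - 1) else 0) + (if i = n then γ n else 0) := by
      intro i hi
      simp only [Finset.mem_Icc] at hi
      simp only [singleAttackC]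
      split_ifs <;> first | ring1 | (exfalso; omega) | (subst_vars; ring1)
    rw [Finset.sum_congr rfl hfun, Finset.sum_add_distrib,
      Finset.sum_ite_eq' (Finset.Icc 1 n) 1, Finset.sum_ite_eq' (Finset.Icc 1 n) n,
      if_pos (by simp [Finset.mem_Icc]; omega : (1:ℕ) ∈ Finset.Icc 1 n),
      if_pos (by simp [Finset.mem_Icc]; omega : n ∈ Finset.Icc 1 n)]
  have key : γ n * (1 - β) = γ 1 * (c (n - 1) * β) := by
    linear_combination -h1 - β * h2
  rw [gt_iff_lt, gt_iff_lt, div_lt_iff₀ (by positivity)]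
  constructor
  · intro h
    nlinarith [key, mul_pos hγ1 (sub_pos.2 hβ1)]
  · intro h
    nlinarith [key, mul_pos hγ1 (sub_pos.2 hβ1)]
end

section
/- (Theorem 2(i), Coordinated Double Attack.) Consider the coordinated double-attack matrix C(β₁,β₂) and any dominant left eigenvector γ of C(β₁,β₂). For all β₁, β₂ ∈ (0,1) with β₁ + β₂ < 1: γ_i < γ_1 for all i ∈ {2,…,n−3}, and γ_{n−1} < γ_{n−2} and γ_n < γ_{n−2}. -/
/-- The coordinated double-attack relative interaction matrix `C(β₁,β₂)` on
nodes `1,…,n`: row 1 has entries `c j` at columns `j = 2,…,n-2`; rows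
`i = 2,…,n-3` have a `1` at column 1; row `n-2` has `1-β₁-β₂` at column 1,
`β₁` at column `n-1` and `β₂` at column `n`; rows `n-1` and `n` have a `1`
at column `n-2`. -/
def coordAttackC (n : ℕ) (c : ℕ → ℝ) (β₁ β₂ : ℝ) : ℕ → ℕ → ℝ := fun i j =>
  if i = 1 then (if 2 ≤ j ∧ j ≤ n - 2 then c j else 0)
  else if 2 ≤ i ∧ i ≤ n - 3 then (if j = 1 then 1 else 0)
  else if i = n - 2 then
    (if j = 1 then 1 - β₁ - β₂ else if j = n - 1 then β₁ else if j = n then β₂ else 0)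
  else if i = n - 1 then (if j = n - 2 then 1 else 0)
  else if i = n then (if j = n - 2 then 1 else 0)
  else 0

set_option maxHeartbeats 1000000 in
theorem coord_attack_thm2_i
    (n : ℕ) (hn : 5 ≤ n) (c : ℕ → ℝ) (β₁ β₂ : ℝ)
    (hc : ∀ j ∈ Finset.Icc 2 (n - 2), 0 < c j)
    (hcsum : ∑ j ∈ Finset.Icc 2 (n - 2), c j = 1)
    (hβ₁ : β₁ ∈ Set.Ioo (0 : ℝ) 1) (hβ₂ : β₂ ∈ Set.Ioo (0 : ℝ) 1)
    (hβsum : β₁ + β₂ < 1)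
    (γ : ℕ → ℝ)
    (hγpos : ∀ i ∈ Finset.Icc 1 n, 0 < γ i)
    (hγsum : ∑ i ∈ Finset.Icc 1 n, γ i = 1)
    (heig : ∀ j ∈ Finset.Icc 1 n,
      ∑ i ∈ Finset.Icc 1 n, γ i * coordAttackC n c β₁ β₂ i j = γ j) :
    (∀ i ∈ Finset.Icc 2 (n - 3), γ i < γ 1) ∧ γ (n - 1) < γ (n - 2) ∧ γ n < γ (n - 2) := by
  obtain ⟨hβ₁0, hβ₁1⟩ := hβ₁
  obtain ⟨hβ₂0, hβ₂1⟩ := hβ₂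
  have hmem1 : (1 : ℕ) ∈ Finset.Icc 1 n := by rw [Finset.mem_Icc]; omega
  have hmemn2 : n - 2 ∈ Finset.Icc 1 n := by rw [Finset.mem_Icc]; omega
  have hγ1 := hγpos 1 hmem1
  have hγn2 := hγpos (n - 2) hmemn2
  refine ⟨?_, ?_, ?_⟩
  · intro j hj
    rw [Finset.mem_Icc] at hj
    have hjmem : j ∈ Finset.Icc 1 n := by rw [Finset.mem_Icc]; omega
    have heq := heig j hjmem
    have hz : ∀ i ∈ Finset.Icc 1 n, i ≠ 1 → γ i * coordAttackC n c β₁ β₂ i j = 0 := by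
      intro i hi hne
      rw [Finset.mem_Icc] at hi
      have h0 : coordAttackC n c β₁ β₂ i j = 0 := by
        unfold coordAttackC
        split_ifs <;> first | rfl | (exfalso; omega)
      rw [h0, mul_zero]
    rw [Finset.sum_eq_single_of_mem 1 hmem1 hz] at heq
    have h1 : coordAttackC n c β₁ β₂ 1 j = c j := by
      unfold coordAttackC
      split_ifs <;> first | rfl | (exfalso; omega)
    rw [h1] at heq
    have hcj : c j < 1 := by
      have hsub : ({j, n - 2} : Finset ℕ) ⊆ Finset.Icc 2 (n - 2) := by
        intro k hk
        simp only [Finset.mem_insert, Finset.mem_singleton] at hk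
        rw [Finset.mem_Icc]; omega
      have hle : c j + c (n - 2) ≤ 1 := by
        rw [← hcsum, ← Finset.sum_pair (show j ≠ n - 2 by omega)]
        exact Finset.sum_le_sum_of_subset_of_nonneg hsub
          (fun k hk _ => (hc k hk).le)
      have hpos := hc (n - 2) (by rw [Finset.mem_Icc]; omega)
      linarith
    calc γ j = γ 1 * c j := heq.symm
      _ < γ 1 * 1 := mul_lt_mul_of_pos_left hcj hγ1
      _ = γ 1 := mul_one _
  · have hjmem : n - 1 ∈ Finset.Icc 1 n := by rw [Finset.mem_Icc]; omega
    have heq := heig (n - 1) hjmem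
    have hz : ∀ i ∈ Finset.Icc 1 n, i ≠ n - 2 → γ i * coordAttackC n c β₁ β₂ i (n - 1) = 0 := by
      intro i hi hne
      rw [Finset.mem_Icc] at hi
      have h0 : coordAttackC n c β₁ β₂ i (n - 1) = 0 := by
        unfold coordAttackC
        split_ifs <;> first | rfl | (exfalso; omega)
      rw [h0, mul_zero]
    rw [Finset.sum_eq_single_of_mem (n - 2) hmemn2 hz] at heq
    have h1 : coordAttackC n c β₁ β₂ (n - 2) (n - 1) = β₁ := by
      unfold coordAttackC
      split_ifs <;> first | rfl | (exfalso; omega)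
    rw [h1] at heq
    calc γ (n - 1) = γ (n - 2) * β₁ := heq.symm
      _ < γ (n - 2) * 1 := mul_lt_mul_of_pos_left hβ₁1 hγn2
      _ = γ (n - 2) := mul_one _
  · have hjmem : n ∈ Finset.Icc 1 n := by rw [Finset.mem_Icc]; omega
    have heq := heig n hjmem
    have hz : ∀ i ∈ Finset.Icc 1 n, i ≠ n - 2 → γ i * coordAttackC n c β₁ β₂ i n = 0 := by
      intro i hi hne
      rw [Finset.mem_Icc] at hi
      have h0 : coordAttackC n c β₁ β₂ i n = 0 := by
        unfold coordAttackC
        split_ifs <;> first | rfl | (exfalso; omega)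
      rw [h0, mul_zero]
    rw [Finset.sum_eq_single_of_mem (n - 2) hmemn2 hz] at heq
    have h1 : coordAttackC n c β₁ β₂ (n - 2) n = β₂ := by
      unfold coordAttackC
      split_ifs <;> first | rfl | (exfalso; omega)
    rw [h1] at heq
    calc γ n = γ (n - 2) * β₂ := heq.symm
      _ < γ (n - 2) * 1 := mul_lt_mul_of_pos_left hβ₂1 hγn2
      _ = γ (n - 2) := mul_one _
end

section
/- (Theorem 2(ii), Coordinated Double Attack.) Consider the coordinated double-attack matrix C(β₁,β₂) and any dominant left eigenvector γ of C(β₁,β₂). Then: (1) γ_1 > γ_i for all i ≠ 1 if and only if β₁ + β₂ < 1 − c_{1,n−2} (equivalently β₁ + β₂ < Σ_{i=2}^{n−3} c_{1,i}); (2) γ_{n−2} > γ_i for all i ≠ n−2 if and only if β₁ + β₂ > 1 − c_{1,n−2}; and (3) γ_1 = γ_{n−2} if and only if β₁ + β₂ = 1 − c_{1,n−2}. Only the sum β₁ + β₂ of the two attack weights matters, not their individual magnitudes. -/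
set_option maxHeartbeats 1000000


theorem coord_attack_thm2_ii
    (n : ℕ) (hn : 5 ≤ n) (c : ℕ → ℝ) (β₁ β₂ : ℝ)
    (hc : ∀ j ∈ Finset.Icc 2 (n - 2), 0 < c j)
    (hcsum : ∑ j ∈ Finset.Icc 2 (n - 2), c j = 1)
    (hβ₁ : β₁ ∈ Set.Ioo (0 : ℝ) 1) (hβ₂ : β₂ ∈ Set.Ioo (0 : ℝ) 1)
    (hβsum : β₁ + β₂ < 1)
    (γ : ℕ → ℝ)
    (hγpos : ∀ i ∈ Finset.Icc 1 n, 0 < γ i)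
    (hγsum : ∑ i ∈ Finset.Icc 1 n, γ i = 1)
    (heig : ∀ j ∈ Finset.Icc 1 n,
      ∑ i ∈ Finset.Icc 1 n, γ i * coordAttackC n c β₁ β₂ i j = γ j) :
    ((∀ i ∈ Finset.Icc 1 n, i ≠ 1 → γ 1 > γ i) ↔ β₁ + β₂ < 1 - c (n - 2)) ∧
    ((∀ i ∈ Finset.Icc 1 n, i ≠ n - 2 → γ (n - 2) > γ i) ↔ β₁ + β₂ > 1 - c (n - 2)) ∧
    (γ 1 = γ (n - 2) ↔ β₁ + β₂ = 1 - c (n - 2)) := by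
  obtain ⟨hβ₁0, hβ₁1⟩ := hβ₁
  obtain ⟨hβ₂0, hβ₂1⟩ := hβ₂
  have h1m : (1:ℕ) ∈ Finset.Icc 1 n := by rw [Finset.mem_Icc]; omega
  have hn2m : n - 2 ∈ Finset.Icc 1 n := by rw [Finset.mem_Icc]; omega
  have hn1m : n - 1 ∈ Finset.Icc 1 n := by rw [Finset.mem_Icc]; omega
  have hnm : n ∈ Finset.Icc 1 n := by rw [Finset.mem_Icc]; omega
  have hγ1 : 0 < γ 1 := hγpos 1 h1m
  have hγn2 : 0 < γ (n - 2) := hγpos _ hn2m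
  -- column n-1 equation : γ (n-1) = γ (n-2) * β₁
  have E1 : γ (n - 1) = γ (n - 2) * β₁ := by
    have h := heig (n - 1) hn1m
    rw [Finset.sum_eq_single_of_mem (n - 2) hn2m] at h
    · rw [← h]
      congr 1
      simp only [coordAttackC]
      split_ifs <;> first | rfl | omega
    · intro i hi hne
      have : coordAttackC n c β₁ β₂ i (n - 1) = 0 := by
        simp only [coordAttackC]
        split_ifs <;> first | rfl | omega
      rw [this, mul_zero]
  -- column n equation : γ n = γ (n-2) * β₂
  have E2 : γ n = γ (n - 2) * β₂ := by
    have h := heig n hnm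
    rw [Finset.sum_eq_single_of_mem (n - 2) hn2m] at h
    · rw [← h]
      congr 1
      simp only [coordAttackC]
      split_ifs <;> first | rfl | omega
    · intro i hi hne
      have : coordAttackC n c β₁ β₂ i n = 0 := by
        simp only [coordAttackC]
        split_ifs <;> first | rfl | omega
      rw [this, mul_zero]
  -- column n-2 equation
  have E3 : γ 1 * c (n - 2) + γ (n - 1) + γ n = γ (n - 2) := by
    have h := heig (n - 2) hn2m
    have hsub : ({1, n - 1, n} : Finset ℕ) ⊆ Finset.Icc 1 n := by
      intro i hi
      simp only [Finset.mem_insert, Finset.mem_singleton] at hi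
      rw [Finset.mem_Icc]; omega
    rw [← Finset.sum_subset hsub (fun i hi hni => by
      simp only [Finset.mem_insert, Finset.mem_singleton, not_or] at hni
      have : coordAttackC n c β₁ β₂ i (n - 2) = 0 := by
        simp only [coordAttackC]
        split_ifs <;> first | rfl | omega
      rw [this, mul_zero])] at h
    rw [Finset.sum_insert (by simp only [Finset.mem_insert, Finset.mem_singleton]; omega),
      Finset.sum_insert (by simp only [Finset.mem_singleton]; omega),
      Finset.sum_singleton] at h
    have hA : coordAttackC n c β₁ β₂ 1 (n - 2) = c (n - 2) := by
      simp only [coordAttackC]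
      split_ifs <;> first | rfl | omega
    have hB : coordAttackC n c β₁ β₂ (n - 1) (n - 2) = 1 := by
      simp only [coordAttackC]
      split_ifs <;> first | rfl | omega
    have hC : coordAttackC n c β₁ β₂ n (n - 2) = 1 := by
      simp only [coordAttackC]
      split_ifs <;> first | rfl | omega
    rw [hA, hB, hC, mul_one, mul_one] at h
    linarith
  -- key balance equation
  have Key : γ (n - 2) * (1 - (β₁ + β₂)) = γ 1 * c (n - 2) := by
    rw [E1, E2] at E3
    linear_combination -E3
  -- columns 2..n-3
  have E4 : ∀ j, 2 ≤ j → j ≤ n - 3 → γ j = γ 1 * c j := by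
    intro j hj2 hj3
    have hjm : j ∈ Finset.Icc 1 n := by rw [Finset.mem_Icc]; omega
    have h := heig j hjm
    rw [Finset.sum_eq_single_of_mem 1 h1m] at h
    · rw [← h]
      congr 1
      simp only [coordAttackC]
      split_ifs <;> first | rfl | omega
    · intro i hi hne
      have : coordAttackC n c β₁ β₂ i j = 0 := by
        simp only [coordAttackC]
        split_ifs <;> first | rfl | omega
      rw [this, mul_zero]
  have hcn2pos : 0 < c (n - 2) := hc _ (by rw [Finset.mem_Icc]; omega)
  have hclt : ∀ j, 2 ≤ j → j ≤ n - 3 → c j < 1 := by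
    intro j hj2 hj3
    have := Finset.single_lt_sum (f := c) (by omega : n - 2 ≠ j)
      (by rw [Finset.mem_Icc]; omega) (by rw [Finset.mem_Icc]; omega) hcn2pos
      (fun k hk _ => le_of_lt (hc k hk))
    rw [hcsum] at this
    exact this
  have hs1 : 0 < 1 - (β₁ + β₂) := by linarith
  refine ⟨⟨?_, ?_⟩, ⟨?_, ?_⟩, ?_, ?_⟩
  · intro h
    have h1 : γ (n - 2) < γ 1 := h (n - 2) hn2m (by omega)
    nlinarith
  · intro h
    have h1 : γ (n - 2) < γ 1 := by nlinarith
    intro i hi hne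
    rw [Finset.mem_Icc] at hi
    by_cases h2 : i = n - 2
    · rw [h2]; exact h1
    by_cases h3 : i = n - 1
    · rw [h3, E1]; nlinarith
    by_cases h4 : i = n
    · rw [h4, E2]; nlinarith
    have hi23 : 2 ≤ i ∧ i ≤ n - 3 := by omega
    rw [E4 i hi23.1 hi23.2]
    have := hclt i hi23.1 hi23.2
    nlinarith
  · intro h
    have h1 : γ 1 < γ (n - 2) := h 1 h1m (by omega)
    nlinarith
  · intro h
    have h1 : γ 1 < γ (n - 2) := by nlinarith
    intro i hi hne
    rw [Finset.mem_Icc] at hi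
    by_cases h2 : i = 1
    · rw [h2]; exact h1
    by_cases h3 : i = n - 1
    · rw [h3, E1]; nlinarith
    by_cases h4 : i = n
    · rw [h4, E2]; nlinarith
    have hi23 : 2 ≤ i ∧ i ≤ n - 3 := by omega
    rw [E4 i hi23.1 hi23.2]
    have := hclt i hi23.1 hi23.2
    nlinarith
  · intro h
    rw [h] at Key
    have := mul_left_cancel₀ (ne_of_gt hγn2) Key
    linarith
  · intro h
    have hc1 : c (n - 2) = 1 - (β₁ + β₂) := by linarith
    rw [hc1] at Key
    exact (mul_right_cancel₀ (ne_of_gt hs1) Key).symm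
end

section
/- (Theorem 2(iii), Coordinated Double Attack.) Consider the coordinated double-attack matrix C(β₁,β₂) and any dominant left eigenvector γ of C(β₁,β₂). Then γ_n > γ_1 if and only if β₂ > (1−β₁)/(1+c_{1,n−2}), and γ_{n−1} > γ_1 if and only if β₁ > (1−β₂)/(1+c_{1,n−2}). Moreover, for any value of c_{1,n−2} ∈ (0,1) there exist β₁, β₂ ∈ (0,1) with β₁ + β₂ < 1 such that both inequalities hold simultaneously, i.e. both attacker nodes attain social power exceeding the centre node. -/
theorem coord_attack_thm2_iii
    (n : ℕ) (hn : 5 ≤ n) (c : ℕ → ℝ) (β₁ β₂ : ℝ)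
    (hc : ∀ j ∈ Finset.Icc 2 (n - 2), 0 < c j)
    (hcsum : ∑ j ∈ Finset.Icc 2 (n - 2), c j = 1)
    (hβ₁ : β₁ ∈ Set.Ioo (0 : ℝ) 1) (hβ₂ : β₂ ∈ Set.Ioo (0 : ℝ) 1)
    (hβsum : β₁ + β₂ < 1)
    (γ : ℕ → ℝ)
    (hγpos : ∀ i ∈ Finset.Icc 1 n, 0 < γ i)
    (hγsum : ∑ i ∈ Finset.Icc 1 n, γ i = 1)
    (heig : ∀ j ∈ Finset.Icc 1 n,
      ∑ i ∈ Finset.Icc 1 n, γ i * coordAttackC n c β₁ β₂ i j = γ j) :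
    (γ n > γ 1 ↔ β₂ > (1 - β₁) / (1 + c (n - 2))) ∧
    (γ (n - 1) > γ 1 ↔ β₁ > (1 - β₂) / (1 + c (n - 2))) ∧
    (∀ a ∈ Set.Ioo (0 : ℝ) 1, ∃ b₁ ∈ Set.Ioo (0 : ℝ) 1, ∃ b₂ ∈ Set.Ioo (0 : ℝ) 1,
      b₁ + b₂ < 1 ∧ b₂ > (1 - b₁) / (1 + a) ∧ b₁ > (1 - b₂) / (1 + a)) := by
  obtain ⟨hβ₁0, hβ₁1⟩ := hβ₁
  obtain ⟨hβ₂0, hβ₂1⟩ := hβ₂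
  have hn2mem : n - 2 ∈ Finset.Icc 1 n := by simp only [Finset.mem_Icc]; omega
  have hn1mem : n - 1 ∈ Finset.Icc 1 n := by simp only [Finset.mem_Icc]; omega
  have hnmem : n ∈ Finset.Icc 1 n := by simp only [Finset.mem_Icc]; omega
  have hcc : 0 < c (n - 2) := hc _ (by simp only [Finset.mem_Icc]; omega)
  have hg : 0 < γ (n - 2) := hγpos _ hn2mem
  have h1c : (0:ℝ) < 1 + c (n - 2) := by linarith
  -- Column n-1 : γ (n-1) = γ (n-2) * β₁
  have E2 : γ (n - 1) = γ (n - 2) * β₁ := by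
    have h := heig (n - 1) hn1mem
    have hs : ({n - 2} : Finset ℕ) ⊆ Finset.Icc 1 n := Finset.singleton_subset_iff.mpr hn2mem
    have hz : ∀ i ∈ Finset.Icc 1 n, i ∉ ({n - 2} : Finset ℕ) →
        γ i * coordAttackC n c β₁ β₂ i (n - 1) = 0 := by
      intro i hi hni
      simp only [Finset.mem_Icc] at hi
      simp only [Finset.mem_singleton] at hni
      unfold coordAttackC
      by_cases h1 : i = 1
      · rw [if_pos h1, if_neg (by omega : ¬(2 ≤ n - 1 ∧ n - 1 ≤ n - 2))]; ring
      rw [if_neg h1]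
      by_cases h2 : 2 ≤ i ∧ i ≤ n - 3
      · rw [if_pos h2, if_neg (by omega : ¬(n - 1 = 1))]; ring
      rw [if_neg h2, if_neg hni]
      rcases (by omega : i = n - 1 ∨ i = n) with h3 | h3
      · rw [if_pos h3, if_neg (by omega : ¬(n - 1 = n - 2))]; ring
      · rw [if_neg (by omega : ¬ i = n - 1), if_pos h3,
          if_neg (by omega : ¬(n - 1 = n - 2))]; ring
    rw [← Finset.sum_subset hs hz, Finset.sum_singleton] at h
    rw [← h]
    unfold coordAttackC
    rw [if_neg (by omega : ¬(n - 2 = 1)), if_neg (by omega : ¬(2 ≤ n - 2 ∧ n - 2 ≤ n - 3)),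
      if_pos rfl, if_neg (by omega : ¬(n - 1 = 1)), if_pos rfl]
  -- Column n : γ n = γ (n-2) * β₂
  have E3 : γ n = γ (n - 2) * β₂ := by
    have h := heig n hnmem
    have hs : ({n - 2} : Finset ℕ) ⊆ Finset.Icc 1 n := Finset.singleton_subset_iff.mpr hn2mem
    have hz : ∀ i ∈ Finset.Icc 1 n, i ∉ ({n - 2} : Finset ℕ) →
        γ i * coordAttackC n c β₁ β₂ i n = 0 := by
      intro i hi hni
      simp only [Finset.mem_Icc] at hi
      simp only [Finset.mem_singleton] at hni
      unfold coordAttackC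
      by_cases h1 : i = 1
      · rw [if_pos h1, if_neg (by omega : ¬(2 ≤ n ∧ n ≤ n - 2))]; ring
      rw [if_neg h1]
      by_cases h2 : 2 ≤ i ∧ i ≤ n - 3
      · rw [if_pos h2, if_neg (by omega : ¬(n = 1))]; ring
      rw [if_neg h2, if_neg hni]
      rcases (by omega : i = n - 1 ∨ i = n) with h3 | h3
      · rw [if_pos h3, if_neg (by omega : ¬(n = n - 2))]; ring
      · rw [if_neg (by omega : ¬ i = n - 1), if_pos h3,
          if_neg (by omega : ¬(n = n - 2))]; ring
    rw [← Finset.sum_subset hs hz, Finset.sum_singleton] at h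
    rw [← h]
    unfold coordAttackC
    rw [if_neg (by omega : ¬(n - 2 = 1)), if_neg (by omega : ¬(2 ≤ n - 2 ∧ n - 2 ≤ n - 3)),
      if_pos rfl, if_neg (by omega : ¬(n = 1)), if_neg (by omega : ¬(n = n - 1)), if_pos rfl]
  -- Column n-2 : γ 1 * c (n-2) + γ (n-1) + γ n = γ (n-2)
  have E1 : γ 1 * c (n - 2) + γ (n - 1) + γ n = γ (n - 2) := by
    have h := heig (n - 2) hn2mem
    have hs : ({1, n - 1, n} : Finset ℕ) ⊆ Finset.Icc 1 n := by
      intro i hi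
      simp only [Finset.mem_insert, Finset.mem_singleton] at hi
      simp only [Finset.mem_Icc]; omega
    have hz : ∀ i ∈ Finset.Icc 1 n, i ∉ ({1, n - 1, n} : Finset ℕ) →
        γ i * coordAttackC n c β₁ β₂ i (n - 2) = 0 := by
      intro i hi hni
      simp only [Finset.mem_Icc] at hi
      simp only [Finset.mem_insert, Finset.mem_singleton] at hni
      push_neg at hni
      obtain ⟨h1, h2, h3⟩ := hni
      unfold coordAttackC
      rw [if_neg h1]
      by_cases h4 : 2 ≤ i ∧ i ≤ n - 3
      · rw [if_pos h4, if_neg (by omega : ¬(n - 2 = 1))]; ring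
      rw [if_neg h4, if_pos (by omega : i = n - 2), if_neg (by omega : ¬(n - 2 = 1)),
        if_neg (by omega : ¬(n - 2 = n - 1)), if_neg (by omega : ¬(n - 2 = n))]; ring
    rw [← Finset.sum_subset hs hz] at h
    rw [Finset.sum_insert (by simp only [Finset.mem_insert, Finset.mem_singleton]; omega),
      Finset.sum_insert (by simp only [Finset.mem_singleton]; omega),
      Finset.sum_singleton] at h
    have hC1 : coordAttackC n c β₁ β₂ 1 (n - 2) = c (n - 2) := by
      unfold coordAttackC
      rw [if_pos rfl, if_pos (by omega : 2 ≤ n - 2 ∧ n - 2 ≤ n - 2)]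
    have hC2 : coordAttackC n c β₁ β₂ (n - 1) (n - 2) = 1 := by
      unfold coordAttackC
      rw [if_neg (by omega : ¬(n - 1 = 1)), if_neg (by omega : ¬(2 ≤ n - 1 ∧ n - 1 ≤ n - 3)),
        if_neg (by omega : ¬(n - 1 = n - 2)), if_pos rfl, if_pos rfl]
    have hC3 : coordAttackC n c β₁ β₂ n (n - 2) = 1 := by
      unfold coordAttackC
      rw [if_neg (by omega : ¬(n = 1)), if_neg (by omega : ¬(2 ≤ n ∧ n ≤ n - 3)),
        if_neg (by omega : ¬(n = n - 2)), if_neg (by omega : ¬(n = n - 1)), if_pos rfl, if_pos rfl]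
    rw [hC1, hC2, hC3] at h
    linarith [h]
  have key : γ 1 * c (n - 2) = γ (n - 2) * (1 - β₁ - β₂) := by
    linear_combination E1 - E2 - E3
  refine ⟨?_, ?_, ?_⟩
  · rw [gt_iff_lt, gt_iff_lt, div_lt_iff₀ h1c]
    constructor
    · intro h
      nlinarith [mul_lt_mul_of_pos_right h hcc, hg, key, E3]
    · intro h
      have h' := mul_lt_mul_of_pos_left h hg
      nlinarith [key, E3, hcc, hg]
  · rw [gt_iff_lt, gt_iff_lt, div_lt_iff₀ h1c]
    constructor
    · intro h
      nlinarith [mul_lt_mul_of_pos_right h hcc, hg, key, E2]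
    · intro h
      have h' := mul_lt_mul_of_pos_left h hg
      nlinarith [key, E2, hcc, hg]
  · intro a ha
    obtain ⟨ha0, ha1⟩ := ha
    have h2a : (0:ℝ) < 2 + a := by linarith
    have h12 : 1 / (2 + a) < 1 / 2 := by
      rw [div_lt_div_iff₀ h2a (by norm_num)]; linarith
    have hb0 : (0:ℝ) < (1 / (2 + a) + 1 / 2) / 2 := by positivity
    set b : ℝ := (1 / (2 + a) + 1 / 2) / 2 with hbdef
    have hbhalf : b < 1 / 2 := by rw [hbdef]; linarith
    have hblow : 1 / (2 + a) < b := by rw [hbdef]; linarith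
    have hkey : 1 < b * (2 + a) := by
      have := mul_lt_mul_of_pos_right hblow h2a
      rwa [div_mul_cancel₀ 1 (ne_of_gt h2a)] at this
    have hineq : (1 - b) / (1 + a) < b := by
      rw [div_lt_iff₀ (by linarith : (0:ℝ) < 1 + a)]
      nlinarith [hkey]
    exact ⟨b, ⟨hb0, by linarith⟩, b, ⟨hb0, by linarith⟩, by linarith, hineq, hineq⟩
end

section
/- (Theorem 3(i), Uncoordinated Double Attack.) Consider the uncoordinated double-attack matrix C(β₁,β₂) and any dominant left eigenvector γ of C(β₁,β₂). For all β₁, β₂ ∈ (0,1): γ_i < γ_1 for all i ∈ {2,…,n−4}, and γ_{n−1} < γ_{n−3} and γ_n < γ_{n−2}. -/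
/-- The uncoordinated double-attack relative interaction matrix `C(β₁,β₂)` on
nodes `1,…,n`: row 1 has entries `c j` at columns `j = 2,…,n-2`; rows
`i = 2,…,n-4` have a `1` at column 1; row `n-3` has `1-β₁` at column 1 and
`β₁` at column `n-1`; row `n-2` has `1-β₂` at column 1 and `β₂` at column `n`;
row `n-1` has a `1` at column `n-3`; row `n` has a `1` at column `n-2`. -/
def uncoordAttackC (n : ℕ) (c : ℕ → ℝ) (β₁ β₂ : ℝ) : ℕ → ℕ → ℝ := fun i j =>
  if i = 1 then (if 2 ≤ j ∧ j ≤ n - 2 then c j else 0)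
  else if 2 ≤ i ∧ i ≤ n - 4 then (if j = 1 then 1 else 0)
  else if i = n - 3 then (if j = 1 then 1 - β₁ else if j = n - 1 then β₁ else 0)
  else if i = n - 2 then (if j = 1 then 1 - β₂ else if j = n then β₂ else 0)
  else if i = n - 1 then (if j = n - 3 then 1 else 0)
  else if i = n then (if j = n - 2 then 1 else 0)
  else 0

theorem uncoord_attack_thm3_i
    (n : ℕ) (hn : 5 ≤ n) (c : ℕ → ℝ) (β₁ β₂ : ℝ)
    (hc : ∀ j ∈ Finset.Icc 2 (n - 2), 0 < c j)
    (hcsum : ∑ j ∈ Finset.Icc 2 (n - 2), c j = 1)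
    (hβ₁ : β₁ ∈ Set.Ioo (0 : ℝ) 1) (hβ₂ : β₂ ∈ Set.Ioo (0 : ℝ) 1)
    (γ : ℕ → ℝ)
    (hγpos : ∀ i ∈ Finset.Icc 1 n, 0 < γ i)
    (hγsum : ∑ i ∈ Finset.Icc 1 n, γ i = 1)
    (heig : ∀ j ∈ Finset.Icc 1 n,
      ∑ i ∈ Finset.Icc 1 n, γ i * uncoordAttackC n c β₁ β₂ i j = γ j) :
    (∀ i ∈ Finset.Icc 2 (n - 4), γ i < γ 1) ∧
    γ (n - 1) < γ (n - 3) ∧ γ n < γ (n - 2) := by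
  obtain ⟨hb1, hb1'⟩ := hβ₁
  obtain ⟨hb2, hb2'⟩ := hβ₂
  have h1mem : (1:ℕ) ∈ Finset.Icc 1 n := by simp [Finset.mem_Icc]; omega
  refine ⟨?_, ?_, ?_⟩
  · intro j hj
    rw [Finset.mem_Icc] at hj
    have hjmem : j ∈ Finset.Icc 1 n := by rw [Finset.mem_Icc]; omega
    have hsum := heig j hjmem
    rw [Finset.sum_eq_single_of_mem 1 h1mem (fun i hi hne => by
      rw [Finset.mem_Icc] at hi
      have hC : uncoordAttackC n c β₁ β₂ i j = 0 := by
        simp only [uncoordAttackC]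
        split_ifs <;> first | rfl | (exfalso; omega)
      rw [hC, mul_zero])] at hsum
    have hC : uncoordAttackC n c β₁ β₂ 1 j = c j := by
      simp only [uncoordAttackC]
      split_ifs <;> first | rfl | (exfalso; omega)
    rw [hC] at hsum
    have hγ1 : 0 < γ 1 := hγpos 1 h1mem
    have hjm : j ∈ Finset.Icc 2 (n-2) := by rw [Finset.mem_Icc]; omega
    have h2 : c j + ∑ k ∈ (Finset.Icc 2 (n-2)).erase j, c k = 1 := by
      rw [Finset.add_sum_erase _ c hjm]; exact hcsum
    have hpos : 0 < ∑ k ∈ (Finset.Icc 2 (n-2)).erase j, c k := by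
      apply Finset.sum_pos
      · intro k hk; exact hc k (Finset.mem_of_mem_erase hk)
      · exact ⟨n-2, Finset.mem_erase.mpr ⟨by omega, by rw [Finset.mem_Icc]; omega⟩⟩
    have hclt : c j < 1 := by linarith
    calc γ j = γ 1 * c j := hsum.symm
      _ < γ 1 * 1 := mul_lt_mul_of_pos_left hclt hγ1
      _ = γ 1 := mul_one _
  · have hjmem : n - 1 ∈ Finset.Icc 1 n := by rw [Finset.mem_Icc]; omega
    have hamem : n - 3 ∈ Finset.Icc 1 n := by rw [Finset.mem_Icc]; omega
    have hsum := heig (n-1) hjmem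
    rw [Finset.sum_eq_single_of_mem (n-3) hamem (fun i hi hne => by
      rw [Finset.mem_Icc] at hi
      have hC : uncoordAttackC n c β₁ β₂ i (n-1) = 0 := by
        simp only [uncoordAttackC]
        split_ifs <;> first | rfl | (exfalso; omega)
      rw [hC, mul_zero])] at hsum
    have hC : uncoordAttackC n c β₁ β₂ (n-3) (n-1) = β₁ := by
      simp only [uncoordAttackC]
      split_ifs <;> first | rfl | (exfalso; omega)
    rw [hC] at hsum
    have hγ3 : 0 < γ (n-3) := hγpos _ hamem
    calc γ (n-1) = γ (n-3) * β₁ := hsum.symm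
      _ < γ (n-3) := mul_lt_of_lt_one_right hγ3 hb1'
  · have hjmem : n ∈ Finset.Icc 1 n := by rw [Finset.mem_Icc]; omega
    have hamem : n - 2 ∈ Finset.Icc 1 n := by rw [Finset.mem_Icc]; omega
    have hsum := heig n hjmem
    rw [Finset.sum_eq_single_of_mem (n-2) hamem (fun i hi hne => by
      rw [Finset.mem_Icc] at hi
      have hC : uncoordAttackC n c β₁ β₂ i n = 0 := by
        simp only [uncoordAttackC]
        split_ifs <;> first | rfl | (exfalso; omega)
      rw [hC, mul_zero])] at hsum
    have hC : uncoordAttackC n c β₁ β₂ (n-2) n = β₂ := by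
      simp only [uncoordAttackC]
      split_ifs <;> first | rfl | (exfalso; omega)
    rw [hC] at hsum
    have hγ2 : 0 < γ (n-2) := hγpos _ hamem
    calc γ n = γ (n-2) * β₂ := hsum.symm
      _ < γ (n-2) := mul_lt_of_lt_one_right hγ2 hb2'
end

section
/- (Theorem 3(ii), Uncoordinated Double Attack.) Consider the uncoordinated double-attack matrix C(β₁,β₂) and any dominant left eigenvector γ of C(β₁,β₂). Then γ_1 > γ_i for all i ≠ 1 if and only if both β₁ < 1 − c_{1,n−3} and β₂ < 1 − c_{1,n−2}. Moreover, if β₁ > 1 − c_{1,n−3} then γ_{n−3} > γ_1, and if β₂ > 1 − c_{1,n−2} then γ_{n−2} > γ_1. -/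
set_option maxHeartbeats 2000000
theorem uncoord_attack_thm3_ii
    (n : ℕ) (hn : 5 ≤ n) (c : ℕ → ℝ) (β₁ β₂ : ℝ)
    (hc : ∀ j ∈ Finset.Icc 2 (n - 2), 0 < c j)
    (hcsum : ∑ j ∈ Finset.Icc 2 (n - 2), c j = 1)
    (hβ₁ : β₁ ∈ Set.Ioo (0 : ℝ) 1) (hβ₂ : β₂ ∈ Set.Ioo (0 : ℝ) 1)
    (γ : ℕ → ℝ)
    (hγpos : ∀ i ∈ Finset.Icc 1 n, 0 < γ i)
    (hγsum : ∑ i ∈ Finset.Icc 1 n, γ i = 1)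
    (heig : ∀ j ∈ Finset.Icc 1 n,
      ∑ i ∈ Finset.Icc 1 n, γ i * uncoordAttackC n c β₁ β₂ i j = γ j) :
    ((∀ i ∈ Finset.Icc 1 n, i ≠ 1 → γ 1 > γ i) ↔
      (β₁ < 1 - c (n - 3) ∧ β₂ < 1 - c (n - 2))) ∧
    (β₁ > 1 - c (n - 3) → γ (n - 3) > γ 1) ∧
    (β₂ > 1 - c (n - 2) → γ (n - 2) > γ 1) := by
  obtain ⟨hb10, hb11⟩ := hβ₁
  obtain ⟨hb20, hb21⟩ := hβ₂
  have hmem : ∀ k, 1 ≤ k → k ≤ n → k ∈ Finset.Icc 1 n := fun k h1 h2 =>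
    Finset.mem_Icc.mpr ⟨h1, h2⟩
  have hγ1 : 0 < γ 1 := hγpos 1 (hmem 1 le_rfl (by omega))
  have hγ3 : 0 < γ (n - 3) := hγpos _ (hmem _ (by omega) (by omega))
  have hγ2 : 0 < γ (n - 2) := hγpos _ (hmem _ (by omega) (by omega))
  -- column n-1 equation: γ (n-1) = β₁ * γ (n-3)
  have eqC : γ (n - 3) * β₁ = γ (n - 1) := by
    have h := heig (n - 1) (hmem _ (by omega) (by omega))
    rw [Finset.sum_eq_single_of_mem (n - 3) (hmem _ (by omega) (by omega))] at h
    · have hv : uncoordAttackC n c β₁ β₂ (n - 3) (n - 1) = β₁ := by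
        simp only [uncoordAttackC]
        split_ifs <;> first | rfl | omega
      rw [hv] at h; exact h
    · intro i hi hne
      rw [Finset.mem_Icc] at hi
      have hv : uncoordAttackC n c β₁ β₂ i (n - 1) = 0 := by
        simp only [uncoordAttackC]
        split_ifs <;> first | rfl | omega
      rw [hv, mul_zero]
  -- column n equation: γ n = β₂ * γ (n-2)
  have eqD : γ (n - 2) * β₂ = γ n := by
    have h := heig n (hmem _ (by omega) le_rfl)
    rw [Finset.sum_eq_single_of_mem (n - 2) (hmem _ (by omega) (by omega))] at h
    · have hv : uncoordAttackC n c β₁ β₂ (n - 2) n = β₂ := by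
        simp only [uncoordAttackC]
        split_ifs <;> first | rfl | omega
      rw [hv] at h; exact h
    · intro i hi hne
      rw [Finset.mem_Icc] at hi
      have hv : uncoordAttackC n c β₁ β₂ i n = 0 := by
        simp only [uncoordAttackC]
        split_ifs <;> first | rfl | omega
      rw [hv, mul_zero]
  -- column n-3 equation: γ 1 * c (n-3) + γ (n-1) = γ (n-3)
  have eqA : γ 1 * c (n - 3) + γ (n - 1) * 1 = γ (n - 3) := by
    have h := heig (n - 3) (hmem _ (by omega) (by omega))
    rw [Finset.sum_eq_add_of_mem 1 (n - 1) (hmem 1 le_rfl (by omega))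
        (hmem _ (by omega) (by omega)) (by omega)] at h
    · have hv1 : uncoordAttackC n c β₁ β₂ 1 (n - 3) = c (n - 3) := by
        simp only [uncoordAttackC]
        split_ifs <;> first | rfl | omega
      have hv2 : uncoordAttackC n c β₁ β₂ (n - 1) (n - 3) = 1 := by
        simp only [uncoordAttackC]
        split_ifs <;> first | rfl | omega
      rw [hv1, hv2] at h; exact h
    · intro i hi hne
      rw [Finset.mem_Icc] at hi
      have hv : uncoordAttackC n c β₁ β₂ i (n - 3) = 0 := by
        simp only [uncoordAttackC]
        split_ifs <;> first | rfl | omega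
      rw [hv, mul_zero]
  -- column n-2 equation: γ 1 * c (n-2) + γ n = γ (n-2)
  have eqB : γ 1 * c (n - 2) + γ n * 1 = γ (n - 2) := by
    have h := heig (n - 2) (hmem _ (by omega) (by omega))
    rw [Finset.sum_eq_add_of_mem 1 n (hmem 1 le_rfl (by omega))
        (hmem _ (by omega) le_rfl) (by omega)] at h
    · have hv1 : uncoordAttackC n c β₁ β₂ 1 (n - 2) = c (n - 2) := by
        simp only [uncoordAttackC]
        split_ifs <;> first | rfl | omega
      have hv2 : uncoordAttackC n c β₁ β₂ n (n - 2) = 1 := by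
        simp only [uncoordAttackC]
        split_ifs <;> first | rfl | omega
      rw [hv1, hv2] at h; exact h
    · intro i hi hne
      rw [Finset.mem_Icc] at hi
      have hv : uncoordAttackC n c β₁ β₂ i (n - 2) = 0 := by
        simp only [uncoordAttackC]
        split_ifs <;> first | rfl | omega
      rw [hv, mul_zero]
  -- key identities
  have key1 : (1 - β₁) * γ (n - 3) = c (n - 3) * γ 1 := by linear_combination -eqA - eqC
  have key2 : (1 - β₂) * γ (n - 2) = c (n - 2) * γ 1 := by linear_combination -eqB - eqD
  -- columns j with 2 ≤ j ≤ n-4 : γ j = γ 1 * c j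
  have eqJ : ∀ j, 2 ≤ j → j ≤ n - 4 → γ 1 * c j = γ j := by
    intro j hj1 hj2
    have h := heig j (hmem _ (by omega) (by omega))
    rw [Finset.sum_eq_single_of_mem 1 (hmem 1 le_rfl (by omega))] at h
    · have hv : uncoordAttackC n c β₁ β₂ 1 j = c j := by
        simp only [uncoordAttackC]
        split_ifs <;> first | rfl | omega
      rw [hv] at h; exact h
    · intro i hi hne
      rw [Finset.mem_Icc] at hi
      have hv : uncoordAttackC n c β₁ β₂ i j = 0 := by
        simp only [uncoordAttackC]
        split_ifs <;> first | rfl | omega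
      rw [hv, mul_zero]
  -- every c j < 1
  have hclt : ∀ j ∈ Finset.Icc 2 (n - 2), c j < 1 := by
    intro j hj
    have h1 : c j + ∑ k ∈ (Finset.Icc 2 (n - 2)).erase j, c k = 1 := by
      rw [Finset.add_sum_erase _ c hj]; exact hcsum
    have hne : ((Finset.Icc 2 (n - 2)).erase j).Nonempty := by
      rw [← Finset.card_pos, Finset.card_erase_of_mem hj, Nat.card_Icc]
      omega
    have h2 : 0 < ∑ k ∈ (Finset.Icc 2 (n - 2)).erase j, c k :=
      Finset.sum_pos (fun k hk => hc k (Finset.mem_of_mem_erase hk)) hne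
    linarith
  have hc3 : 0 < c (n - 3) := hc _ (Finset.mem_Icc.mpr ⟨by omega, by omega⟩)
  have hc2 : 0 < c (n - 2) := hc _ (Finset.mem_Icc.mpr ⟨by omega, by omega⟩)
  refine ⟨⟨fun h => ?_, fun ⟨h1, h2⟩ => ?_⟩, fun h => ?_, fun h => ?_⟩
  · constructor
    · have h3 := h (n - 3) (hmem _ (by omega) (by omega)) (by omega)
      nlinarith [key1]
    · have h2 := h (n - 2) (hmem _ (by omega) (by omega)) (by omega)
      nlinarith [key2]
  · -- backward direction
    intro i hi hne
    rw [Finset.mem_Icc] at hi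
    have hlt3 : γ (n - 3) < γ 1 := by nlinarith [key1]
    have hlt2 : γ (n - 2) < γ 1 := by nlinarith [key2]
    by_cases e3 : i = n - 3
    · rw [e3]; exact hlt3
    by_cases e2 : i = n - 2
    · rw [e2]; exact hlt2
    by_cases e1 : i = n - 1
    · rw [e1, ← eqC]; nlinarith
    by_cases e0 : i = n
    · rw [e0, ← eqD]; nlinarith
    · have hji : 2 ≤ i ∧ i ≤ n - 4 := by omega
      have := eqJ i hji.1 hji.2
      have hci : c i < 1 := hclt i (Finset.mem_Icc.mpr ⟨by omega, by omega⟩)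
      have hcip : 0 < c i := hc i (Finset.mem_Icc.mpr ⟨by omega, by omega⟩)
      nlinarith
  · nlinarith [key1]
  · nlinarith [key2]
end

section
/- (Theorem 3(iii), Uncoordinated Double Attack.) Consider the uncoordinated double-attack matrix C(β₁,β₂) and any dominant left eigenvector γ of C(β₁,β₂). Then γ_{n−1} > γ_1 if and only if β₁ > 1/(1 + c_{1,n−3}), and γ_n > γ_1 if and only if β₂ > 1/(1 + c_{1,n−2}). -/
set_option maxHeartbeats 1000000 in
theorem uncoord_attack_thm3_iii
    (n : ℕ) (hn : 5 ≤ n) (c : ℕ → ℝ) (β₁ β₂ : ℝ)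
    (hc : ∀ j ∈ Finset.Icc 2 (n - 2), 0 < c j)
    (hcsum : ∑ j ∈ Finset.Icc 2 (n - 2), c j = 1)
    (hβ₁ : β₁ ∈ Set.Ioo (0 : ℝ) 1) (hβ₂ : β₂ ∈ Set.Ioo (0 : ℝ) 1)
    (γ : ℕ → ℝ)
    (hγpos : ∀ i ∈ Finset.Icc 1 n, 0 < γ i)
    (hγsum : ∑ i ∈ Finset.Icc 1 n, γ i = 1)
    (heig : ∀ j ∈ Finset.Icc 1 n,
      ∑ i ∈ Finset.Icc 1 n, γ i * uncoordAttackC n c β₁ β₂ i j = γ j) :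
    (γ (n - 1) > γ 1 ↔ β₁ > 1 / (1 + c (n - 3))) ∧
    (γ n > γ 1 ↔ β₂ > 1 / (1 + c (n - 2))) := by
  obtain ⟨m, rfl⟩ : ∃ m, n = m + 5 := ⟨n - 5, by omega⟩
  obtain ⟨hb1, hb1'⟩ := hβ₁
  obtain ⟨hb2, hb2'⟩ := hβ₂
  have hg1 : 0 < γ 1 := hγpos 1 (Finset.mem_Icc.mpr ⟨by omega, by omega⟩)
  have hg2 : 0 < γ (m+2) := hγpos (m+2) (Finset.mem_Icc.mpr ⟨by omega, by omega⟩)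
  have hg3 : 0 < γ (m+3) := hγpos (m+3) (Finset.mem_Icc.mpr ⟨by omega, by omega⟩)
  have hc2 : 0 < c (m+2) := hc (m+2) (Finset.mem_Icc.mpr ⟨by omega, by omega⟩)
  have hc3 : 0 < c (m+3) := hc (m+3) (Finset.mem_Icc.mpr ⟨by omega, by omega⟩)
  have hsplit : Finset.Icc 1 (m+5) = insert 1 (Finset.Icc 2 (m+5)) := by
    ext x; simp only [Finset.mem_Icc, Finset.mem_insert]; omega
  have hCa : uncoordAttackC (m+5) c β₁ β₂ (m+2) (m+4) = β₁ := by
    simp only [uncoordAttackC]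
    split_ifs <;> first | rfl | (exfalso; omega)
  have hCb : uncoordAttackC (m+5) c β₁ β₂ (m+3) (m+5) = β₂ := by
    simp only [uncoordAttackC]
    split_ifs <;> first | rfl | (exfalso; omega)
  have hCc : uncoordAttackC (m+5) c β₁ β₂ 1 (m+2) = c (m+2) := by
    simp only [uncoordAttackC]
    rw [if_pos trivial, if_pos (show 2 ≤ m+2 ∧ m+2 ≤ m+5-2 by omega)]
  have hCd : uncoordAttackC (m+5) c β₁ β₂ (m+4) (m+2) = 1 := by
    simp only [uncoordAttackC]
    split_ifs <;> first | rfl | (exfalso; omega)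
  have hCe : uncoordAttackC (m+5) c β₁ β₂ 1 (m+3) = c (m+3) := by
    simp only [uncoordAttackC]
    rw [if_pos trivial, if_pos (show 2 ≤ m+3 ∧ m+3 ≤ m+5-2 by omega)]
  have hCf : uncoordAttackC (m+5) c β₁ β₂ (m+5) (m+3) = 1 := by
    simp only [uncoordAttackC]
    split_ifs <;> first | rfl | (exfalso; omega)
  have e1 : γ (m+2) * β₁ = γ (m+4) := by
    have h := heig (m+4) (Finset.mem_Icc.mpr ⟨by omega, by omega⟩)
    rw [Finset.sum_eq_single_of_mem (m+2) (Finset.mem_Icc.mpr ⟨by omega, by omega⟩)] at h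
    · rw [hCa] at h; exact h
    · intro i hi hne
      have hi' := Finset.mem_Icc.mp hi
      simp only [uncoordAttackC]
      split_ifs <;> first | exact mul_zero _ | (exfalso; omega)
  have e3 : γ (m+3) * β₂ = γ (m+5) := by
    have h := heig (m+5) (Finset.mem_Icc.mpr ⟨by omega, by omega⟩)
    rw [Finset.sum_eq_single_of_mem (m+3) (Finset.mem_Icc.mpr ⟨by omega, by omega⟩)] at h
    · rw [hCb] at h; exact h
    · intro i hi hne
      have hi' := Finset.mem_Icc.mp hi
      simp only [uncoordAttackC]
      split_ifs <;> first | exact mul_zero _ | (exfalso; omega)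
  have e2 : γ 1 * c (m+2) + γ (m+4) = γ (m+2) := by
    have h := heig (m+2) (Finset.mem_Icc.mpr ⟨by omega, by omega⟩)
    rw [hsplit, Finset.sum_insert (by simp),
      Finset.sum_eq_single_of_mem (m+4) (Finset.mem_Icc.mpr ⟨by omega, by omega⟩)] at h
    · rw [hCc, hCd, mul_one] at h; exact h
    · intro i hi hne
      have hi' := Finset.mem_Icc.mp hi
      simp only [uncoordAttackC]
      split_ifs <;> first | exact mul_zero _ | (exfalso; omega)
  have e4 : γ 1 * c (m+3) + γ (m+5) = γ (m+3) := by
    have h := heig (m+3) (Finset.mem_Icc.mpr ⟨by omega, by omega⟩)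
    rw [hsplit, Finset.sum_insert (by simp),
      Finset.sum_eq_single_of_mem (m+5) (Finset.mem_Icc.mpr ⟨by omega, by omega⟩)] at h
    · rw [hCe, hCf, mul_one] at h; exact h
    · intro i hi hne
      have hi' := Finset.mem_Icc.mp hi
      simp only [uncoordAttackC]
      split_ifs <;> first | exact mul_zero _ | (exfalso; omega)
  refine ⟨?_, ?_⟩
  · show γ (m+4) > γ 1 ↔ β₁ > 1 / (1 + c (m+2))
    rw [gt_iff_lt, gt_iff_lt, div_lt_iff₀ (by linarith : (0:ℝ) < 1 + c (m+2))]
    constructor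
    · intro h
      nlinarith [mul_lt_mul_of_pos_right h (show (0:ℝ) < 1 - β₁ by linarith), e1, e2, hg1, hg2]
    · intro h
      have h' : 1 - β₁ < β₁ * c (m+2) := by nlinarith
      nlinarith [mul_lt_mul_of_pos_left h' hg1, e1, e2, hg2]
  · show γ (m+5) > γ 1 ↔ β₂ > 1 / (1 + c (m+3))
    rw [gt_iff_lt, gt_iff_lt, div_lt_iff₀ (by linarith : (0:ℝ) < 1 + c (m+3))]
    constructor
    · intro h
      nlinarith [mul_lt_mul_of_pos_right h (show (0:ℝ) < 1 - β₂ by linarith), e3, e4, hg1, hg3]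
    · intro h
      have h' : 1 - β₂ < β₂ * c (m+3) := by nlinarith
      nlinarith [mul_lt_mul_of_pos_left h' hg1, e3, e4, hg3]
end

section
/- (Theorem 3(iv), Uncoordinated Double Attack.) Consider the uncoordinated double-attack matrix C(β₁,β₂) and any dominant left eigenvector γ of C(β₁,β₂). Then γ_{n−3} > γ_{n−2} if and only if (1−β₂)/(1−β₁) > c_{1,n−2}/c_{1,n−3}. -/
lemma uncoord_key_col3 (n : ℕ) (hn : 5 ≤ n) (c : ℕ → ℝ) (β₁ β₂ : ℝ) (γ : ℕ → ℝ)
    (i : ℕ) (hi1 : 1 ≤ i) (hi2 : i ≤ n) :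
    γ i * uncoordAttackC n c β₁ β₂ i (n - 3)
      = (if i = 1 then γ 1 * c (n - 3) else 0) + (if i = n - 1 then γ (n - 1) else 0) := by
  unfold uncoordAttackC
  split_ifs <;> first | (exfalso; omega) | (subst_vars; ring)

lemma uncoord_key_col1 (n : ℕ) (hn : 5 ≤ n) (c : ℕ → ℝ) (β₁ β₂ : ℝ) (γ : ℕ → ℝ)
    (i : ℕ) (hi1 : 1 ≤ i) (hi2 : i ≤ n) :
    γ i * uncoordAttackC n c β₁ β₂ i (n - 1)
      = (if i = n - 3 then β₁ * γ (n - 3) else 0) := by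
  unfold uncoordAttackC
  split_ifs <;> first | (exfalso; omega) | (subst_vars; ring)

lemma uncoord_key_col2 (n : ℕ) (hn : 5 ≤ n) (c : ℕ → ℝ) (β₁ β₂ : ℝ) (γ : ℕ → ℝ)
    (i : ℕ) (hi1 : 1 ≤ i) (hi2 : i ≤ n) :
    γ i * uncoordAttackC n c β₁ β₂ i (n - 2)
      = (if i = 1 then γ 1 * c (n - 2) else 0) + (if i = n then γ n else 0) := by
  unfold uncoordAttackC
  split_ifs <;> first | (exfalso; omega) | (subst_vars; ring)

lemma uncoord_key_coln (n : ℕ) (hn : 5 ≤ n) (c : ℕ → ℝ) (β₁ β₂ : ℝ) (γ : ℕ → ℝ)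
    (i : ℕ) (hi1 : 1 ≤ i) (hi2 : i ≤ n) :
    γ i * uncoordAttackC n c β₁ β₂ i n
      = (if i = n - 2 then β₂ * γ (n - 2) else 0) := by
  unfold uncoordAttackC
  split_ifs <;> first | (exfalso; omega) | (subst_vars; ring)

set_option maxHeartbeats 1000000

theorem uncoord_attack_thm3_iv
    (n : ℕ) (hn : 5 ≤ n) (c : ℕ → ℝ) (β₁ β₂ : ℝ)
    (hc : ∀ j ∈ Finset.Icc 2 (n - 2), 0 < c j)
    (hcsum : ∑ j ∈ Finset.Icc 2 (n - 2), c j = 1)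
    (hβ₁ : β₁ ∈ Set.Ioo (0 : ℝ) 1) (hβ₂ : β₂ ∈ Set.Ioo (0 : ℝ) 1)
    (γ : ℕ → ℝ)
    (hγpos : ∀ i ∈ Finset.Icc 1 n, 0 < γ i)
    (hγsum : ∑ i ∈ Finset.Icc 1 n, γ i = 1)
    (heig : ∀ j ∈ Finset.Icc 1 n,
      ∑ i ∈ Finset.Icc 1 n, γ i * uncoordAttackC n c β₁ β₂ i j = γ j) :
    γ (n - 3) > γ (n - 2) ↔ (1 - β₂) / (1 - β₁) > c (n - 2) / c (n - 3) := by
  obtain ⟨hb1, hb1'⟩ := hβ₁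
  obtain ⟨hb2, hb2'⟩ := hβ₂
  have h1b : (0:ℝ) < 1 - β₁ := by linarith
  have h2b : (0:ℝ) < 1 - β₂ := by linarith
  have hγ1 : 0 < γ 1 := hγpos 1 (by simp [Finset.mem_Icc]; omega)
  have hc3 : 0 < c (n - 3) := hc _ (by simp [Finset.mem_Icc]; omega)
  have hc2 : 0 < c (n - 2) := hc _ (by simp [Finset.mem_Icc]; omega)
  have hm1 : (1:ℕ) ≤ n := by omega
  have hm2a : (1:ℕ) ≤ n - 1 := by omega
  have hm2b : n - 1 ≤ n := by omega
  -- Equation for column n-3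
  have E1 : γ 1 * c (n - 3) + γ (n - 1) = γ (n - 3) := by
    have h := heig (n - 3) (by simp [Finset.mem_Icc]; omega)
    rw [Finset.sum_congr rfl (fun i hi => by
        simp only [Finset.mem_Icc] at hi
        exact uncoord_key_col3 n hn c β₁ β₂ γ i hi.1 hi.2),
      Finset.sum_add_distrib,
      Finset.sum_ite_eq' (Finset.Icc 1 n), Finset.sum_ite_eq' (Finset.Icc 1 n)] at h
    simpa [Finset.mem_Icc, hm1, hm2a, hm2b] using h
  -- Equation for column n-1
  have E2 : β₁ * γ (n - 3) = γ (n - 1) := by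
    have h := heig (n - 1) (by simp [Finset.mem_Icc]; omega)
    rw [Finset.sum_congr rfl (fun i hi => by
        simp only [Finset.mem_Icc] at hi
        exact uncoord_key_col1 n hn c β₁ β₂ γ i hi.1 hi.2),
      Finset.sum_ite_eq' (Finset.Icc 1 n)] at h
    have hm : (n - 3 : ℕ) ∈ Finset.Icc 1 n := by simp [Finset.mem_Icc]; omega
    rw [if_pos hm] at h
    exact h
  -- Equation for column n-2
  have E3 : γ 1 * c (n - 2) + γ n = γ (n - 2) := by
    have h := heig (n - 2) (by simp [Finset.mem_Icc]; omega)
    rw [Finset.sum_congr rfl (fun i hi => by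
        simp only [Finset.mem_Icc] at hi
        exact uncoord_key_col2 n hn c β₁ β₂ γ i hi.1 hi.2),
      Finset.sum_add_distrib,
      Finset.sum_ite_eq' (Finset.Icc 1 n), Finset.sum_ite_eq' (Finset.Icc 1 n)] at h
    simpa [Finset.mem_Icc, hm1] using h
  -- Equation for column n
  have E4 : β₂ * γ (n - 2) = γ n := by
    have h := heig n (by simp [Finset.mem_Icc]; omega)
    rw [Finset.sum_congr rfl (fun i hi => by
        simp only [Finset.mem_Icc] at hi
        exact uncoord_key_coln n hn c β₁ β₂ γ i hi.1 hi.2),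
      Finset.sum_ite_eq' (Finset.Icc 1 n)] at h
    have hm : (n - 2 : ℕ) ∈ Finset.Icc 1 n := by simp [Finset.mem_Icc]; omega
    rw [if_pos hm] at h
    exact h
  have K1 : (1 - β₁) * γ (n - 3) = γ 1 * c (n - 3) := by linear_combination -E1 - E2
  have K2 : (1 - β₂) * γ (n - 2) = γ 1 * c (n - 2) := by linear_combination -E3 - E4
  rw [gt_iff_lt, gt_iff_lt, div_lt_div_iff₀ hc3 h1b]
  constructor
  · intro h
    have hpos : 0 < (1 - β₁) * (1 - β₂) * (γ (n - 3) - γ (n - 2)) := by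
      have : 0 < γ (n - 3) - γ (n - 2) := by linarith
      positivity
    have hlt : γ 1 * (c (n - 2) * (1 - β₁)) < γ 1 * ((1 - β₂) * c (n - 3)) := by
      nlinarith [K1, K2]
    exact lt_of_mul_lt_mul_left hlt hγ1.le
  · intro h
    have hpos : 0 < γ 1 * ((1 - β₂) * c (n - 3) - c (n - 2) * (1 - β₁)) := by
      have : 0 < (1 - β₂) * c (n - 3) - c (n - 2) * (1 - β₁) := by linarith
      positivity
    nlinarith [K1, K2, mul_pos h1b h2b]
end

section
/- Consider the dissenting-subjects matrix C(β₁,β₂). Any dominant left eigenvector γ of C(β₁,β₂) satisfies the identities: γ_i = c_{1,i}·γ_1 for every i ∈ {2,…,n−2}, γ_{n−1} = ((c_{1,n−1} + β₂·c_{1,n})/(1 − β₁β₂))·γ_1, and γ_n = ((c_{1,n} + β₁·c_{1,n−1})/(1 − β₁β₂))·γ_1. -/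
/-!
Column `j` of `γᵀ C` only sees the rows with a nonzero entry in column `j`. For a subject
`j ≤ n - 2` that is the centre alone, giving `γ j = c j γ₁`. For the two dissenters it is the
centre and the other dissenter, giving the coupled system
`γ (n-1) = c (n-1) γ₁ + β₂ γ n` and `γ n = c n γ₁ + β₁ γ (n-1)`,
which has a unique solution because `β₁ β₂ < 1`.
-/

/-- The dissenting-subjects relative interaction matrix `C(β₁,β₂)` on nodes
`1,…,n`: row 1 has entries `c j` at columns `j = 2,…,n`; rows `i = 2,…,n-2`
have a `1` at column 1; row `n-1` has `1-β₁` at column 1 and `β₁` at column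
`n`; row `n` has `1-β₂` at column 1 and `β₂` at column `n-1`. -/
def dissentC (n : ℕ) (c : ℕ → ℝ) (β₁ β₂ : ℝ) : ℕ → ℕ → ℝ := fun i j =>
  if i = 1 then (if 2 ≤ j ∧ j ≤ n then c j else 0)
  else if 2 ≤ i ∧ i ≤ n - 2 then (if j = 1 then 1 else 0)
  else if i = n - 1 then (if j = 1 then 1 - β₁ else if j = n then β₁ else 0)
  else if i = n then (if j = 1 then 1 - β₂ else if j = n - 1 then β₂ else 0)
  else 0

theorem eq_div_mul_of_coupled {x y a b t β₁ β₂ : ℝ} (hβ : β₁ * β₂ ≠ 1)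
    (hx : x = a * t + β₂ * y) (hy : y = b * t + β₁ * x) :
    x = ((a + β₂ * b) / (1 - β₁ * β₂)) * t ∧
      y = ((b + β₁ * a) / (1 - β₁ * β₂)) * t := by
  have hD : 1 - β₁ * β₂ ≠ 0 := sub_ne_zero.mpr hβ.symm
  constructor
  · rw [div_mul_eq_mul_div, eq_div_iff hD]
    linear_combination hx + β₂ * hy
  · rw [div_mul_eq_mul_div, eq_div_iff hD]
    linear_combination hy + β₁ * hx

namespace dissentC

variable {n : ℕ} {c : ℕ → ℝ} {β₁ β₂ : ℝ} (γ : ℕ → ℝ)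

theorem sum_mul_col_of_le_sub_two {j : ℕ} (hj₂ : 2 ≤ j) (hjn : j ≤ n - 2) :
    ∑ i ∈ Finset.Icc 1 n, γ i * dissentC n c β₁ β₂ i j = γ 1 * c j := by
  rw [Finset.sum_eq_single_of_mem 1 (Finset.mem_Icc.2 (by omega))]
  · simp only [dissentC]
    split_ifs <;> first | omega | ring
  · intro i _ hi
    simp only [dissentC]
    split_ifs <;> first | omega | simp

theorem sum_mul_col_sub_one (hn : 3 ≤ n) :
    ∑ i ∈ Finset.Icc 1 n, γ i * dissentC n c β₁ β₂ i (n - 1) =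
      γ 1 * c (n - 1) + γ n * β₂ := by
  rw [Finset.sum_eq_add_of_mem 1 n (Finset.mem_Icc.2 (by omega)) (Finset.mem_Icc.2 (by omega))
    (by omega)]
  · simp only [dissentC]
    split_ifs <;> first | omega | ring
  · intro i _ hi
    simp only [dissentC]
    split_ifs <;> first | omega | simp

theorem sum_mul_col_n (hn : 3 ≤ n) :
    ∑ i ∈ Finset.Icc 1 n, γ i * dissentC n c β₁ β₂ i n =
      γ 1 * c n + γ (n - 1) * β₁ := by
  rw [Finset.sum_eq_add_of_mem 1 (n - 1) (Finset.mem_Icc.2 (by omega))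
    (Finset.mem_Icc.2 (by omega)) (by omega)]
  · simp only [dissentC]
    split_ifs <;> first | omega | ring
  · intro i _ hi
    simp only [dissentC]
    split_ifs <;> first | omega | simp

end dissentC

theorem dissent_eigenvector_identities_general
    (n : ℕ) (hn : 4 ≤ n) (c : ℕ → ℝ) (β₁ β₂ : ℝ)
    (hβ₁ : β₁ ∈ Set.Ioo (0 : ℝ) 1) (hβ₂ : β₂ ∈ Set.Ioo (0 : ℝ) 1)
    (γ : ℕ → ℝ)
    (heig : ∀ j ∈ Finset.Icc 1 n,
      ∑ i ∈ Finset.Icc 1 n, γ i * dissentC n c β₁ β₂ i j = γ j) :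
    (∀ i ∈ Finset.Icc 2 (n - 2), γ i = c i * γ 1) ∧
    γ (n - 1) = ((c (n - 1) + β₂ * c n) / (1 - β₁ * β₂)) * γ 1 ∧
    γ n = ((c n + β₁ * c (n - 1)) / (1 - β₁ * β₂)) * γ 1 := by
  have hβ : β₁ * β₂ ≠ 1 :=
    (mul_lt_one_of_nonneg_of_lt_one_left hβ₁.1.le hβ₁.2 hβ₂.2.le).ne
  have hγ_sub_one : γ (n - 1) = c (n - 1) * γ 1 + β₂ * γ n := by
    rw [← heig (n - 1) (Finset.mem_Icc.2 (by omega)),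
      dissentC.sum_mul_col_sub_one γ (by omega)]
    ring
  have hγ_n : γ n = c n * γ 1 + β₁ * γ (n - 1) := by
    rw [← heig n (Finset.mem_Icc.2 (by omega)), dissentC.sum_mul_col_n γ (by omega)]
    ring
  refine ⟨fun i hi => ?_, eq_div_mul_of_coupled hβ hγ_sub_one hγ_n⟩
  rw [Finset.mem_Icc] at hi
  rw [← heig i (Finset.mem_Icc.2 (by omega)), dissentC.sum_mul_col_of_le_sub_two γ hi.1 hi.2,
    mul_comm]

theorem dissent_eigenvector_identities
    (n : ℕ) (hn : 4 ≤ n) (c : ℕ → ℝ) (β₁ β₂ : ℝ)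
    (hc : ∀ j ∈ Finset.Icc 2 n, 0 < c j)
    (hcsum : ∑ j ∈ Finset.Icc 2 n, c j = 1)
    (hβ₁ : β₁ ∈ Set.Ioo (0 : ℝ) 1) (hβ₂ : β₂ ∈ Set.Ioo (0 : ℝ) 1)
    (γ : ℕ → ℝ)
    (hγpos : ∀ i ∈ Finset.Icc 1 n, 0 < γ i)
    (hγsum : ∑ i ∈ Finset.Icc 1 n, γ i = 1)
    (heig : ∀ j ∈ Finset.Icc 1 n,
      ∑ i ∈ Finset.Icc 1 n, γ i * dissentC n c β₁ β₂ i j = γ j) :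
    (∀ i ∈ Finset.Icc 2 (n - 2), γ i = c i * γ 1) ∧
    γ (n - 1) = ((c (n - 1) + β₂ * c n) / (1 - β₁ * β₂)) * γ 1 ∧
    γ n = ((c n + β₁ * c (n - 1)) / (1 - β₁ * β₂)) * γ 1 :=
  dissent_eigenvector_identities_general n hn c β₁ β₂ hβ₁ hβ₂ γ heig
end

section
/- (Theorem 4(i), Two Dissenting Subjects.) Consider the dissenting-subjects matrix C(β₁,β₂) and any dominant left eigenvector γ of C(β₁,β₂). For all β₁, β₂ ∈ (0,1): γ_i < γ_1 for all i ∈ {2,…,n−2}. -/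
theorem dissent_thm4_i
    (n : ℕ) (hn : 4 ≤ n) (c : ℕ → ℝ) (β₁ β₂ : ℝ)
    (hc : ∀ j ∈ Finset.Icc 2 n, 0 < c j)
    (hcsum : ∑ j ∈ Finset.Icc 2 n, c j = 1)
    (hβ₁ : β₁ ∈ Set.Ioo (0 : ℝ) 1) (hβ₂ : β₂ ∈ Set.Ioo (0 : ℝ) 1)
    (γ : ℕ → ℝ)
    (hγpos : ∀ i ∈ Finset.Icc 1 n, 0 < γ i)
    (hγsum : ∑ i ∈ Finset.Icc 1 n, γ i = 1)
    (heig : ∀ j ∈ Finset.Icc 1 n,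
      ∑ i ∈ Finset.Icc 1 n, γ i * dissentC n c β₁ β₂ i j = γ j) :
    ∀ i ∈ Finset.Icc 2 (n - 2), γ i < γ 1 := by
  intro i hi
  simp only [Finset.mem_Icc] at hi
  have hi1 : i ∈ Finset.Icc 1 n := by simp only [Finset.mem_Icc]; omega
  have key := heig i hi1
  have hsum : ∑ k ∈ Finset.Icc 1 n, γ k * dissentC n c β₁ β₂ k i = γ 1 * c i := by
    rw [Finset.sum_eq_single_of_mem 1 (by simp only [Finset.mem_Icc]; omega)]
    · have : dissentC n c β₁ β₂ 1 i = c i := by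
        have h2 : 2 ≤ i ∧ i ≤ n := ⟨hi.1, by omega⟩
        simp only [dissentC, if_pos rfl, if_pos h2, if_true]
      rw [this]
    · intro b hb hb1
      simp only [Finset.mem_Icc] at hb
      have : dissentC n c β₁ β₂ b i = 0 := by
        simp only [dissentC]
        split_ifs <;> first | rfl | omega
      rw [this, mul_zero]
  have hci : c i < 1 := by
    rw [← hcsum]
    exact Finset.single_lt_sum (show n ≠ i by omega)
      (by simp only [Finset.mem_Icc]; omega) (by simp only [Finset.mem_Icc]; omega)
      (hc n (by simp only [Finset.mem_Icc]; omega))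
      (fun k hk _ => (hc k hk).le)
  have hγ1 : 0 < γ 1 := hγpos 1 (by simp only [Finset.mem_Icc]; omega)
  have : γ i = γ 1 * c i := by rw [← key, hsum]
  rw [this]
  calc γ 1 * c i < γ 1 * 1 := by exact mul_lt_mul_of_pos_left hci hγ1
    _ = γ 1 := mul_one _
end

section
/- (Theorem 4(ii), Two Dissenting Subjects.) Consider the dissenting-subjects matrix C(β₁,β₂) and any dominant left eigenvector γ of C(β₁,β₂). Then γ_n > γ_1 if and only if β₁ > (1 − c_{1,n})/(c_{1,n−1} + β₂). Moreover, there exists β₁ ∈ (0,1) satisfying this inequality only if β₂ > 1 − c_{1,n} − c_{1,n−1} (equivalently β₂ > Σ_{i=2}^{n−2} c_{1,i}). -/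
theorem dissent_thm4_ii
    (n : ℕ) (hn : 4 ≤ n) (c : ℕ → ℝ) (β₁ β₂ : ℝ)
    (hc : ∀ j ∈ Finset.Icc 2 n, 0 < c j)
    (hcsum : ∑ j ∈ Finset.Icc 2 n, c j = 1)
    (hβ₁ : β₁ ∈ Set.Ioo (0 : ℝ) 1) (hβ₂ : β₂ ∈ Set.Ioo (0 : ℝ) 1)
    (γ : ℕ → ℝ)
    (hγpos : ∀ i ∈ Finset.Icc 1 n, 0 < γ i)
    (hγsum : ∑ i ∈ Finset.Icc 1 n, γ i = 1)
    (heig : ∀ j ∈ Finset.Icc 1 n,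
      ∑ i ∈ Finset.Icc 1 n, γ i * dissentC n c β₁ β₂ i j = γ j) :
    (γ n > γ 1 ↔ β₁ > (1 - c n) / (c (n - 1) + β₂)) ∧
    ((∃ b₁ ∈ Set.Ioo (0 : ℝ) 1, b₁ > (1 - c n) / (c (n - 1) + β₂)) →
      β₂ > 1 - c n - c (n - 1)) := by
  obtain ⟨hb1, hb1'⟩ := hβ₁
  obtain ⟨hb2, hb2'⟩ := hβ₂
  have hcn : 0 < c n := hc n (by simp [Finset.mem_Icc]; omega)
  have hcn1 : 0 < c (n-1) := hc (n-1) (by simp [Finset.mem_Icc]; omega)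
  have hg1 : 0 < γ 1 := hγpos 1 (by simp [Finset.mem_Icc]; omega)
  have hgn : 0 < γ n := hγpos n (by simp [Finset.mem_Icc]; omega)
  have hgn1 : 0 < γ (n-1) := hγpos (n-1) (by simp [Finset.mem_Icc]; omega)
  have hden : 0 < c (n-1) + β₂ := by linarith
  -- eigen equation at column n-1
  have key1 : ∑ i ∈ Finset.Icc 1 n, γ i * dissentC n c β₁ β₂ i (n-1)
      = γ 1 * c (n-1) + γ n * β₂ := by
    have hsub : ({1, n} : Finset ℕ) ⊆ Finset.Icc 1 n := by
      intro i hi; simp at hi; simp [Finset.mem_Icc]; omega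
    rw [← Finset.sum_subset hsub]
    · rw [Finset.sum_pair (by omega : (1:ℕ) ≠ n)]
      have e1 : dissentC n c β₁ β₂ 1 (n-1) = c (n-1) := by
        simp [dissentC, show 2 ≤ n-1 by omega, show n-1 ≤ n by omega]
      have e2 : dissentC n c β₁ β₂ n (n-1) = β₂ := by
        simp only [dissentC]
        split_ifs <;> first | rfl | omega
      rw [e1, e2]
    · intro i hi hni
      simp [Finset.mem_Icc] at hi
      simp at hni
      have hz : dissentC n c β₁ β₂ i (n-1) = 0 := by
        simp only [dissentC]
        split_ifs <;> first | rfl | omega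
      rw [hz, mul_zero]
  -- eigen equation at column n
  have key2 : ∑ i ∈ Finset.Icc 1 n, γ i * dissentC n c β₁ β₂ i n
      = γ 1 * c n + γ (n-1) * β₁ := by
    have hsub : ({1, n-1} : Finset ℕ) ⊆ Finset.Icc 1 n := by
      intro i hi; simp at hi; simp [Finset.mem_Icc]; omega
    rw [← Finset.sum_subset hsub]
    · rw [Finset.sum_pair (by omega : (1:ℕ) ≠ n-1)]
      have e1 : dissentC n c β₁ β₂ 1 n = c n := by
        simp [dissentC, show 2 ≤ n by omega]
      have e2 : dissentC n c β₁ β₂ (n-1) n = β₁ := by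
        simp only [dissentC]
        split_ifs <;> first | rfl | omega
      rw [e1, e2]
    · intro i hi hni
      simp [Finset.mem_Icc] at hi
      simp at hni
      have hz : dissentC n c β₁ β₂ i n = 0 := by
        simp only [dissentC]
        split_ifs <;> first | rfl | omega
      rw [hz, mul_zero]
  have eqA : γ 1 * c (n-1) + γ n * β₂ = γ (n-1) := by
    rw [← key1]; exact heig (n-1) (by simp [Finset.mem_Icc]; omega)
  have eqB : γ 1 * c n + γ (n-1) * β₁ = γ n := by
    rw [← key2]; exact heig n (by simp [Finset.mem_Icc]; omega)
  have h1mbb : 0 < 1 - β₁ * β₂ := by nlinarith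
  have hrel : γ n * (1 - β₁ * β₂) = γ 1 * (c n + β₁ * c (n-1)) := by
    linear_combination (-1 : ℝ) * eqB - β₁ * eqA
  constructor
  · simp only [gt_iff_lt]
    rw [div_lt_iff₀ hden]
    constructor
    · intro h
      nlinarith [mul_lt_mul_of_pos_right h h1mbb]
    · intro h
      nlinarith [mul_pos hg1 (show (0:ℝ) < c n + β₁ * c (n-1) - (1 - β₁*β₂) by nlinarith)]
  · rintro ⟨b, ⟨hb0, hb1''⟩, hbgt⟩
    have h' : 1 - c n < c (n-1) + β₂ := (div_lt_one hden).mp (lt_trans hbgt hb1'')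
    simp only [gt_iff_lt]
    linarith
end

section
/- (Theorem 4(iii), Two Dissenting Subjects.) Consider the dissenting-subjects matrix C(β₁,β₂) and any dominant left eigenvector γ of C(β₁,β₂). Then γ_{n−1} > γ_1 if and only if β₂ > (1 − c_{1,n−1})/(c_{1,n} + β₁). Moreover, there exists β₂ ∈ (0,1) satisfying this inequality only if β₁ > 1 − c_{1,n} − c_{1,n−1} (equivalently β₁ > Σ_{i=2}^{n−2} c_{1,i}). -/
theorem dissent_thm4_iii
    (n : ℕ) (hn : 4 ≤ n) (c : ℕ → ℝ) (β₁ β₂ : ℝ)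
    (hc : ∀ j ∈ Finset.Icc 2 n, 0 < c j)
    (hcsum : ∑ j ∈ Finset.Icc 2 n, c j = 1)
    (hβ₁ : β₁ ∈ Set.Ioo (0 : ℝ) 1) (hβ₂ : β₂ ∈ Set.Ioo (0 : ℝ) 1)
    (γ : ℕ → ℝ)
    (hγpos : ∀ i ∈ Finset.Icc 1 n, 0 < γ i)
    (hγsum : ∑ i ∈ Finset.Icc 1 n, γ i = 1)
    (heig : ∀ j ∈ Finset.Icc 1 n,
      ∑ i ∈ Finset.Icc 1 n, γ i * dissentC n c β₁ β₂ i j = γ j) :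
    (γ (n - 1) > γ 1 ↔ β₂ > (1 - c (n - 1)) / (c n + β₁)) ∧
    ((∃ b₂ ∈ Set.Ioo (0 : ℝ) 1, b₂ > (1 - c (n - 1)) / (c n + β₁)) →
      β₁ > 1 - c n - c (n - 1)) := by
  obtain ⟨hb1, hb1'⟩ := hβ₁
  obtain ⟨hb2, hb2'⟩ := hβ₂
  have hn1 : n - 1 ∈ Finset.Icc 1 n := by simp [Finset.mem_Icc]; omega
  have hnn : n ∈ Finset.Icc 1 n := by simp [Finset.mem_Icc]; omega
  have h1m : (1 : ℕ) ∈ Finset.Icc 1 n := by simp [Finset.mem_Icc]; omega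
  have hcn1 : 0 < c (n - 1) := hc _ (by simp [Finset.mem_Icc]; omega)
  have hcn : 0 < c n := hc _ (by simp [Finset.mem_Icc]; omega)
  have hγ1 := hγpos 1 h1m
  have hγn1 := hγpos _ hn1
  have hγn := hγpos _ hnn
  have hsub : ({1, n - 1, n} : Finset ℕ) ⊆ Finset.Icc 1 n := by
    intro x hx
    simp only [Finset.mem_insert, Finset.mem_singleton] at hx
    simp only [Finset.mem_Icc]
    omega
  have key : ∀ j, (j = n - 1 ∨ j = n) →
      ∑ i ∈ Finset.Icc 1 n, γ i * dissentC n c β₁ β₂ i j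
      = γ 1 * dissentC n c β₁ β₂ 1 j + γ (n - 1) * dissentC n c β₁ β₂ (n - 1) j
        + γ n * dissentC n c β₁ β₂ n j := by
    intro j hj
    rw [← Finset.sum_subset hsub]
    · rw [show ({1, n - 1, n} : Finset ℕ) = insert 1 (insert (n - 1) {n}) from rfl,
        Finset.sum_insert (by simp; omega), Finset.sum_insert (by simp; omega),
        Finset.sum_singleton]
      ring
    · intro x hx hx'
      simp only [Finset.mem_Icc] at hx
      simp only [Finset.mem_insert, Finset.mem_singleton, not_or] at hx'
      have hz : dissentC n c β₁ β₂ x j = 0 := by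
        simp only [dissentC]
        rw [if_neg (by omega), if_pos (by omega), if_neg (by omega)]
      rw [hz, mul_zero]
  have e1 := heig (n - 1) hn1
  have e2 := heig n hnn
  rw [key _ (Or.inl rfl)] at e1
  rw [key _ (Or.inr rfl)] at e2
  have E11 : dissentC n c β₁ β₂ 1 (n - 1) = c (n - 1) := by
    simp only [dissentC]
    split_ifs <;> first | rfl | (exfalso; omega)
  have E21 : dissentC n c β₁ β₂ (n - 1) (n - 1) = 0 := by
    simp only [dissentC]
    split_ifs <;> first | rfl | (exfalso; omega)
  have E31 : dissentC n c β₁ β₂ n (n - 1) = β₂ := by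
    simp only [dissentC]
    split_ifs <;> first | rfl | (exfalso; omega)
  have E12 : dissentC n c β₁ β₂ 1 n = c n := by
    simp only [dissentC]
    split_ifs <;> first | rfl | (exfalso; omega)
  have E22 : dissentC n c β₁ β₂ (n - 1) n = β₁ := by
    simp only [dissentC]
    split_ifs <;> first | rfl | (exfalso; omega)
  have E32 : dissentC n c β₁ β₂ n n = 0 := by
    simp only [dissentC]
    split_ifs <;> first | rfl | (exfalso; omega)
  rw [E11, E21, E31] at e1
  rw [E12, E22, E32] at e2
  -- e1 : γ 1 * c (n-1) + γ (n-1) * 0 + γ n * β₂ = γ (n-1)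
  -- e2 : γ 1 * c n + γ (n-1) * β₁ + γ n * 0 = γ n
  have hrel : γ (n - 1) * (1 - β₁ * β₂) = γ 1 * (c (n - 1) + β₂ * c n) := by
    linear_combination -e1 - β₂ * e2
  have hpos : 0 < 1 - β₁ * β₂ := by nlinarith
  have hden : 0 < c n + β₁ := by linarith
  constructor
  · rw [gt_iff_lt, gt_iff_lt, div_lt_iff₀ hden]
    constructor
    · intro h
      nlinarith [mul_pos (sub_pos.mpr h) hpos]
    · intro h
      nlinarith [mul_pos hγ1 (sub_pos.mpr h)]
  · rintro ⟨b₂, ⟨hb, hb'⟩, hgt⟩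
    have : (1 - c (n - 1)) / (c n + β₁) < 1 := lt_trans hgt hb'
    rw [div_lt_one hden] at this
    linarith
end

section
/- (Theorem 4(iv), Two Dissenting Subjects.) Consider the dissenting-subjects matrix C(β₁,β₂) and any dominant left eigenvector γ of C(β₁,β₂). Then γ_n < γ_{n−1} if and only if c_{1,n} + β₁·c_{1,n−1} < c_{1,n−1} + β₂·c_{1,n}; this follows from the identities γ_{n−1}·(1−β₁β₂) = (c_{1,n−1} + β₂·c_{1,n})·γ_1 and γ_n·(1−β₁β₂) = (c_{1,n} + β₁·c_{1,n−1})·γ_1. -/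
lemma pair_sum (s : Finset ℕ) (f : ℕ → ℝ) (a b : ℕ) (ha : a ∈ s) (hb : b ∈ s)
    (hab : a ≠ b) (h0 : ∀ x ∈ s, x ≠ a → x ≠ b → f x = 0) :
    ∑ x ∈ s, f x = f a + f b := by
  rw [← Finset.sum_pair hab]
  refine (Finset.sum_subset ?_ ?_).symm
  · intro x hx
    simp only [Finset.mem_insert, Finset.mem_singleton] at hx
    rcases hx with rfl | rfl <;> assumption
  · intro x hx hnx
    simp only [Finset.mem_insert, Finset.mem_singleton, not_or] at hnx
    exact h0 x hx hnx.1 hnx.2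

theorem dissent_thm4_iv
    (n : ℕ) (hn : 4 ≤ n) (c : ℕ → ℝ) (β₁ β₂ : ℝ)
    (hc : ∀ j ∈ Finset.Icc 2 n, 0 < c j)
    (hcsum : ∑ j ∈ Finset.Icc 2 n, c j = 1)
    (hβ₁ : β₁ ∈ Set.Ioo (0 : ℝ) 1) (hβ₂ : β₂ ∈ Set.Ioo (0 : ℝ) 1)
    (γ : ℕ → ℝ)
    (hγpos : ∀ i ∈ Finset.Icc 1 n, 0 < γ i)
    (hγsum : ∑ i ∈ Finset.Icc 1 n, γ i = 1)
    (heig : ∀ j ∈ Finset.Icc 1 n,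
      ∑ i ∈ Finset.Icc 1 n, γ i * dissentC n c β₁ β₂ i j = γ j) :
    (γ n < γ (n - 1) ↔ c n + β₁ * c (n - 1) < c (n - 1) + β₂ * c n) ∧
    γ (n - 1) * (1 - β₁ * β₂) = (c (n - 1) + β₂ * c n) * γ 1 ∧
    γ n * (1 - β₁ * β₂) = (c n + β₁ * c (n - 1)) * γ 1 := by
  obtain ⟨hb1, hb1'⟩ := hβ₁
  obtain ⟨hb2, hb2'⟩ := hβ₂
  -- eigen equation at column n
  have hmemn : n ∈ Finset.Icc 1 n := by simp; omega
  have hmem1 : (1:ℕ) ∈ Finset.Icc 1 n := by simp; omega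
  have hmemn1 : n - 1 ∈ Finset.Icc 1 n := by simp; omega
  have hEn : γ 1 * c n + γ (n-1) * β₁ = γ n := by
    have h := heig n hmemn
    rw [pair_sum _ _ 1 (n-1) hmem1 hmemn1 (by omega)] at h
    · have e1 : dissentC n c β₁ β₂ 1 n = c n := by
        simp only [dissentC]
        split_ifs <;> first | rfl | (exfalso; omega)
      have e2 : dissentC n c β₁ β₂ (n-1) n = β₁ := by
        simp only [dissentC]
        split_ifs <;> first | rfl | (exfalso; omega)
      rw [e1, e2] at h; exact h
    · intro x hx hx1 hx2
      simp only [Finset.mem_Icc] at hx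
      have : dissentC n c β₁ β₂ x n = 0 := by
        simp only [dissentC]
        split_ifs <;> first | rfl | (exfalso; omega)
      rw [this, mul_zero]
  have hEn1 : γ 1 * c (n-1) + γ n * β₂ = γ (n-1) := by
    have h := heig (n-1) hmemn1
    rw [pair_sum _ _ 1 n hmem1 hmemn (by omega)] at h
    · have e1 : dissentC n c β₁ β₂ 1 (n-1) = c (n-1) := by
        simp only [dissentC]
        split_ifs <;> first | rfl | (exfalso; omega)
      have e2 : dissentC n c β₁ β₂ n (n-1) = β₂ := by
        simp only [dissentC]
        split_ifs <;> first | rfl | (exfalso; omega)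
      rw [e1, e2] at h; exact h
    · intro x hx hx1 hx2
      simp only [Finset.mem_Icc] at hx
      have : dissentC n c β₁ β₂ x (n-1) = 0 := by
        simp only [dissentC]
        split_ifs <;> first | rfl | (exfalso; omega)
      rw [this, mul_zero]
  have hid1 : γ (n - 1) * (1 - β₁ * β₂) = (c (n - 1) + β₂ * c n) * γ 1 := by
    linear_combination -hEn1 - β₂ * hEn
  have hid2 : γ n * (1 - β₁ * β₂) = (c n + β₁ * c (n - 1)) * γ 1 := by
    linear_combination -hEn - β₁ * hEn1
  have hγ1 : 0 < γ 1 := hγpos 1 hmem1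
  have hD : 0 < 1 - β₁ * β₂ := by nlinarith
  refine ⟨?_, hid1, hid2⟩
  constructor
  · intro h
    have := mul_lt_mul_of_pos_right h hD
    rw [hid1, hid2] at this
    exact lt_of_mul_lt_mul_right this hγ1.le
  · intro h
    have := mul_lt_mul_of_pos_right h hγ1
    rw [← hid1, ← hid2] at this
    exact lt_of_mul_lt_mul_right this hD.le
end

section
/- (Theorem 5(i), Leadership Group.) Consider the leadership-group matrix C(β₁,β₂) and any dominant left eigenvector γ of C(β₁,β₂). For all β₁, β₂ ∈ (0,1): γ_i < γ_1 for all i ∈ {2,…,n}, and γ_k < γ_{n+1} for all k ∈ {n+2,…,n+m}. -/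
/-- The leadership-group relative interaction matrix `C(β₁,β₂)` on nodes
`1,…,n+m`: row 1 has entries `c j` at columns `j = 2,…,n` and `β₁` at column
`n+1`; rows `i = 2,…,n` have a `1` at column 1; row `n+1` has `β₂` at column
1 and entries `d j` at columns `j = n+2,…,n+m`; rows `k = n+2,…,n+m` have a
`1` at column `n+1`. -/
def leaderC (n m : ℕ) (c d : ℕ → ℝ) (β₁ β₂ : ℝ) : ℕ → ℕ → ℝ := fun i j =>
  if i = 1 then (if 2 ≤ j ∧ j ≤ n then c j else if j = n + 1 then β₁ else 0)
  else if 2 ≤ i ∧ i ≤ n then (if j = 1 then 1 else 0)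
  else if i = n + 1 then
    (if j = 1 then β₂ else if n + 2 ≤ j ∧ j ≤ n + m then d j else 0)
  else if n + 2 ≤ i ∧ i ≤ n + m then (if j = n + 1 then 1 else 0)
  else 0

theorem leader_group_thm5_i
    (n m : ℕ) (hn : 3 ≤ n) (hm : 3 ≤ m) (c d : ℕ → ℝ) (β₁ β₂ : ℝ)
    (hβ₁ : β₁ ∈ Set.Ioo (0 : ℝ) 1) (hβ₂ : β₂ ∈ Set.Ioo (0 : ℝ) 1)
    (hc : ∀ j ∈ Finset.Icc 2 n, 0 < c j)
    (hcsum : ∑ j ∈ Finset.Icc 2 n, c j = 1 - β₁)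
    (hd : ∀ j ∈ Finset.Icc (n + 2) (n + m), 0 < d j)
    (hdsum : ∑ j ∈ Finset.Icc (n + 2) (n + m), d j = 1 - β₂)
    (γ : ℕ → ℝ)
    (hγpos : ∀ i ∈ Finset.Icc 1 (n + m), 0 < γ i)
    (hγsum : ∑ i ∈ Finset.Icc 1 (n + m), γ i = 1)
    (heig : ∀ j ∈ Finset.Icc 1 (n + m),
      ∑ i ∈ Finset.Icc 1 (n + m), γ i * leaderC n m c d β₁ β₂ i j = γ j) :
    (∀ i ∈ Finset.Icc 2 n, γ i < γ 1) ∧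
    (∀ k ∈ Finset.Icc (n + 2) (n + m), γ k < γ (n + 1)) := by
  obtain ⟨hβ₁0, hβ₁1⟩ := hβ₁
  obtain ⟨hβ₂0, hβ₂1⟩ := hβ₂
  constructor
  · intro j hj
    rw [Finset.mem_Icc] at hj
    have hj' : j ∈ Finset.Icc 1 (n + m) := by rw [Finset.mem_Icc]; omega
    have key := heig j hj'
    rw [Finset.sum_eq_single_of_mem 1 (by rw [Finset.mem_Icc]; omega)
      (fun i hi hne => by
        rw [Finset.mem_Icc] at hi
        simp only [leaderC]
        split_ifs <;> first | omega | ring)] at key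
    have hC : leaderC n m c d β₁ β₂ 1 j = c j := by
      simp only [leaderC]
      split_ifs <;> first | omega | rfl
    rw [hC] at key
    have hγ1 : 0 < γ 1 := hγpos 1 (by rw [Finset.mem_Icc]; omega)
    have hcj : c j < 1 := by
      have h1 : c j ≤ ∑ k ∈ Finset.Icc 2 n, c k :=
        Finset.single_le_sum (fun k hk => (hc k hk).le) (by rw [Finset.mem_Icc]; omega)
      rw [hcsum] at h1; linarith
    calc γ j = γ 1 * c j := key.symm
      _ < γ 1 * 1 := by exact mul_lt_mul_of_pos_left hcj hγ1
      _ = γ 1 := mul_one _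
  · intro j hj
    rw [Finset.mem_Icc] at hj
    have hj' : j ∈ Finset.Icc 1 (n + m) := by rw [Finset.mem_Icc]; omega
    have key := heig j hj'
    rw [Finset.sum_eq_single_of_mem (n + 1) (by rw [Finset.mem_Icc]; omega)
      (fun i hi hne => by
        rw [Finset.mem_Icc] at hi
        simp only [leaderC]
        split_ifs <;> first | omega | ring)] at key
    have hC : leaderC n m c d β₁ β₂ (n + 1) j = d j := by
      simp only [leaderC]
      split_ifs <;> first | omega | rfl
    rw [hC] at key
    have hγ1 : 0 < γ (n + 1) := hγpos (n + 1) (by rw [Finset.mem_Icc]; omega)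
    have hdj : d j < 1 := by
      have h1 : d j ≤ ∑ k ∈ Finset.Icc (n + 2) (n + m), d k :=
        Finset.single_le_sum (fun k hk => (hd k hk).le) (by rw [Finset.mem_Icc]; omega)
      rw [hdsum] at h1; linarith
    calc γ j = γ (n + 1) * d j := key.symm
      _ < γ (n + 1) * 1 := by exact mul_lt_mul_of_pos_left hdj hγ1
      _ = γ (n + 1) := mul_one _
end

section
/- (Theorem 5(ii), Leadership Group.) Consider the leadership-group matrix C(β₁,β₂) and any dominant left eigenvector γ of C(β₁,β₂). Then β₁·γ_1 = β₂·γ_{n+1}; consequently γ_1 < γ_{n+1} if and only if β₂ < β₁, γ_1 > γ_{n+1} if and only if β₂ > β₁, and γ_1 = γ_{n+1} if and only if β₁ = β₂. -/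
theorem leader_group_thm5_ii
    (n m : ℕ) (hn : 3 ≤ n) (hm : 3 ≤ m) (c d : ℕ → ℝ) (β₁ β₂ : ℝ)
    (hβ₁ : β₁ ∈ Set.Ioo (0 : ℝ) 1) (hβ₂ : β₂ ∈ Set.Ioo (0 : ℝ) 1)
    (hc : ∀ j ∈ Finset.Icc 2 n, 0 < c j)
    (hcsum : ∑ j ∈ Finset.Icc 2 n, c j = 1 - β₁)
    (hd : ∀ j ∈ Finset.Icc (n + 2) (n + m), 0 < d j)
    (hdsum : ∑ j ∈ Finset.Icc (n + 2) (n + m), d j = 1 - β₂)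
    (γ : ℕ → ℝ)
    (hγpos : ∀ i ∈ Finset.Icc 1 (n + m), 0 < γ i)
    (hγsum : ∑ i ∈ Finset.Icc 1 (n + m), γ i = 1)
    (heig : ∀ j ∈ Finset.Icc 1 (n + m),
      ∑ i ∈ Finset.Icc 1 (n + m), γ i * leaderC n m c d β₁ β₂ i j = γ j) :
    β₁ * γ 1 = β₂ * γ (n + 1) ∧
    (γ 1 < γ (n + 1) ↔ β₂ < β₁) ∧
    (γ 1 > γ (n + 1) ↔ β₂ > β₁) ∧
    (γ 1 = γ (n + 1) ↔ β₁ = β₂) := by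
  obtain ⟨hβ₁0, hβ₁1⟩ := hβ₁
  obtain ⟨hβ₂0, hβ₂1⟩ := hβ₂
  have hγ1 : 0 < γ 1 := hγpos 1 (by rw [Finset.mem_Icc]; omega)
  have hγn1 : 0 < γ (n + 1) := hγpos (n + 1) (by rw [Finset.mem_Icc]; omega)
  -- columns 2..n: γ j = γ 1 * c j
  have hcol : ∀ j ∈ Finset.Icc 2 n, γ j = γ 1 * c j := by
    intro j hj
    rw [Finset.mem_Icc] at hj
    have h := heig j (by rw [Finset.mem_Icc]; omega)
    rw [← h]
    have hsub : ({1} : Finset ℕ) ⊆ Finset.Icc 1 (n + m) := by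
      intro x hx
      simp only [Finset.mem_singleton] at hx
      rw [Finset.mem_Icc]; omega
    rw [← Finset.sum_subset hsub ?_]
    · rw [Finset.sum_singleton]
      congr 1
      unfold leaderC
      split_ifs <;> first | rfl | omega
    · intro i hi hiS
      rw [Finset.mem_Icc] at hi
      simp only [Finset.mem_singleton] at hiS
      have : leaderC n m c d β₁ β₂ i j = 0 := by
        unfold leaderC
        split_ifs <;> first | rfl | omega
      rw [this, mul_zero]
  have hA : ∑ j ∈ Finset.Icc 2 n, γ j = γ 1 * (1 - β₁) := by
    rw [Finset.sum_congr rfl hcol, ← Finset.mul_sum, hcsum]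
  -- column 1
  have h1 : γ 1 = (∑ i ∈ Finset.Icc 2 n, γ i) + β₂ * γ (n + 1) := by
    have h := heig 1 (by rw [Finset.mem_Icc]; omega)
    rw [← h]
    have hnot : (n + 1) ∉ Finset.Icc 2 n := by rw [Finset.mem_Icc]; omega
    have hsub : insert (n + 1) (Finset.Icc 2 n) ⊆ Finset.Icc 1 (n + m) := by
      intro x hx
      simp only [Finset.mem_insert, Finset.mem_Icc] at hx
      rw [Finset.mem_Icc]; omega
    rw [← Finset.sum_subset hsub ?_]
    · rw [Finset.sum_insert hnot]
      have hv : γ (n + 1) * leaderC n m c d β₁ β₂ (n + 1) 1 = β₂ * γ (n + 1) := by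
        have : leaderC n m c d β₁ β₂ (n + 1) 1 = β₂ := by
          unfold leaderC
          split_ifs <;> first | rfl | omega
        rw [this]; ring
      rw [hv]
      have hterms : ∀ i ∈ Finset.Icc 2 n,
          γ i * leaderC n m c d β₁ β₂ i 1 = γ i := by
        intro i hi
        rw [Finset.mem_Icc] at hi
        have : leaderC n m c d β₁ β₂ i 1 = 1 := by
          unfold leaderC
          split_ifs <;> first | rfl | omega
        rw [this, mul_one]
      rw [Finset.sum_congr rfl hterms]
      ring
    · intro i hi hiS
      rw [Finset.mem_Icc] at hi
      simp only [Finset.mem_insert, Finset.mem_Icc] at hiS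
      push_neg at hiS
      have : leaderC n m c d β₁ β₂ i 1 = 0 := by
        unfold leaderC
        split_ifs <;> first | rfl | omega
      rw [this, mul_zero]
  have key : β₁ * γ 1 = β₂ * γ (n + 1) := by
    rw [hA] at h1; nlinarith
  refine ⟨key, ?_, ?_, ?_⟩
  · constructor
    · intro h; nlinarith
    · intro h; nlinarith
  · constructor
    · intro h; nlinarith
    · intro h; nlinarith
  · constructor
    · intro h; nlinarith
    · intro h; nlinarith
end
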